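/- arXiv:2208.09593 — 5 statements merged into one kernel-verified Lean document; each statement's English description precedes it below -/
import Mathlib

section
/- The integral from 0 to 1 of arctan(x)² dx equals π²/16 + (1/4)·π·log 2 − G, where G is Catalan's constant. -/
/-!
Differentiating `x * arctan x ^ 2 - arctan x * log (1 + x ^ 2)` reduces the integral to
`∫₀¹ log (1 + x²) / (1 + x²)`, which the substitution `x = tan θ` turns into
`-2 ∫₀^{π/4} log (cos θ)`. The integrals of `log sin` and `log cos` over `[0, π/4]` add up to
`∫₀^{π/2} log sin = -(π/2) log 2`, and their difference is
`∫₀^{π/4} log (tan θ) = ∫₀¹ log x / (1 + x²) = -G`, by expanding `1 / (1 + x²)` as a geometric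
series and using `∫₀¹ x^{2n} log x = -1 / (2n + 1)²`.
-/

open Real

/-- Catalan's constant `G = ∑_{n≥1} (−1)^{n−1}/(2n−1)²`. -/
noncomputable def catalanConst : ℝ := ∑' n : ℕ, (-1 : ℝ) ^ n / (2 * (n : ℝ) + 1) ^ 2

open MeasureTheory intervalIntegral Set

namespace Real

-- As `log 0 = 0` and `log (-1) = 0`, this and the next identity hold where `sin` or `cos` vanishes.
lemma log_tan (x : ℝ) : log (tan x) = log (sin x) - log (cos x) := by
  rw [tan_eq_sin_div_cos]
  rcases eq_or_ne (sin x) 0 with hs | hs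
  · simp [hs, log_eq_zero.2 (Or.inr (sin_eq_zero_iff_cos_eq.1 hs))]
  rcases eq_or_ne (cos x) 0 with hc | hc
  · simp [hc, log_eq_zero.2 (Or.inr (cos_eq_zero_iff_sin_eq.1 hc))]
  exact log_div hs hc

lemma log_one_add_tan_sq (x : ℝ) : log (1 + tan x ^ 2) = -2 * log (cos x) := by
  rcases eq_or_ne (cos x) 0 with hc | hc
  · simp [tan_eq_sin_div_cos, hc]
  rw [← inv_inv (1 + tan x ^ 2), inv_one_add_tan_sq hc, log_inv, log_pow]
  push_cast
  ring

lemma image_tan_Ioc {a b : ℝ} (ha : a ∈ Ioo (-(π / 2)) (π / 2))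
    (hb : b ∈ Ioo (-(π / 2)) (π / 2)) : tan '' Ioc a b = Ioc (tan a) (tan b) := by
  ext y
  constructor
  · rintro ⟨θ, ⟨haθ, hθb⟩, rfl⟩
    have hθ : θ ∈ Ioo (-(π / 2)) (π / 2) := ⟨ha.1.trans haθ, hθb.trans_lt hb.2⟩
    exact ⟨strictMonoOn_tan ha hθ haθ, strictMonoOn_tan.monotoneOn hθ hb hθb⟩
  · rintro ⟨hay, hyb⟩
    refine ⟨arctan y, ⟨?_, ?_⟩, tan_arctan y⟩
    · calc a = arctan (tan a) := (arctan_tan ha.1 ha.2).symm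
        _ < arctan y := arctan_strictMono hay
    · calc arctan y ≤ arctan (tan b) := arctan_mono hyb
        _ = b := arctan_tan hb.1 hb.2

end Real

-- No integrability assumption on `g`: the change of variables formula for set integrals along an
-- injective differentiable map holds unconditionally.
theorem integral_comp_tan {E : Type*} [NormedAddCommGroup E] [NormedSpace ℝ E]
    (g : ℝ → E) {a b : ℝ} (ha : a ∈ Ioo (-(π / 2)) (π / 2)) (hb : b ∈ Ioo (-(π / 2)) (π / 2))
    (hab : a ≤ b) : ∫ θ in a..b, g (tan θ) = ∫ x in tan a..tan b, (1 + x ^ 2)⁻¹ • g x := by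
  have hIoo : Ioc a b ⊆ Ioo (-(π / 2)) (π / 2) := fun θ hθ =>
    ⟨ha.1.trans hθ.1, hθ.2.trans_lt hb.2⟩
  have hcos : ∀ θ ∈ Ioc a b, cos θ ≠ 0 := fun θ hθ => (cos_pos_of_mem_Ioo (hIoo hθ)).ne'
  rw [integral_of_le hab, integral_of_le (strictMonoOn_tan.monotoneOn ha hb hab),
    ← image_tan_Ioc ha hb, integral_image_eq_integral_abs_deriv_smul measurableSet_Ioc
      (fun θ hθ => (hasDerivAt_tan (hcos θ hθ)).hasDerivWithinAt)
      (strictMonoOn_tan.injOn.mono hIoo)]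
  refine setIntegral_congr_fun measurableSet_Ioc fun θ hθ => ?_
  rw [smul_smul, inv_one_add_tan_sq (hcos θ hθ), abs_of_nonneg (by positivity),
    one_div, inv_mul_cancel₀ (pow_ne_zero 2 (hcos θ hθ)), one_smul]

lemma integral_comp_tan_zero_pi_div_four (g : ℝ → ℝ) :
    ∫ θ in (0:ℝ)..(π / 4), g (tan θ) = ∫ x in (0:ℝ)..1, g x / (1 + x ^ 2) := by
  have h0 : (0:ℝ) ∈ Ioo (-(π / 2)) (π / 2) := ⟨by linarith [pi_pos], by positivity⟩
  have h1 : π / 4 ∈ Ioo (-(π / 2)) (π / 2) := ⟨by linarith [pi_pos], by linarith [pi_pos]⟩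
  rw [integral_comp_tan g h0 h1 (by positivity), tan_zero, tan_pi_div_four]
  simp only [smul_eq_mul, inv_mul_eq_div]

lemma integral_pow_mul_log (k : ℕ) : ∫ x in (0:ℝ)..1, x ^ k * log x = -1 / (k + 1) ^ 2 := by
  set H : ℝ → ℝ := fun x => x ^ (k + 1) * log x / (k + 1) - x ^ (k + 1) / (k + 1) ^ 2
  have hH_cont : Continuous H := by
    refine (by fun_prop : Continuous fun x : ℝ =>
      x ^ k * (x * log x) / (k + 1) - x ^ (k + 1) / (k + 1) ^ 2).congr fun x => ?_
    ring
  have hH_deriv : ∀ x ∈ Ioo (0:ℝ) 1, HasDerivAt H (x ^ k * log x) x := by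
    intro x hx
    have hpow : HasDerivAt (fun y : ℝ => y ^ (k + 1)) ((k + 1) * x ^ k) x := by
      simpa using hasDerivAt_pow (k + 1) x
    refine (((hpow.mul (hasDerivAt_log hx.1.ne')).div_const ((k : ℝ) + 1)).sub
      (hpow.div_const (((k : ℝ) + 1) ^ 2))).congr_deriv ?_
    have hx0 : x ≠ 0 := hx.1.ne'
    field_simp
    ring
  rw [integral_eq_sub_of_hasDerivAt_of_le zero_le_one hH_cont.continuousOn hH_deriv
    (intervalIntegrable_log'.continuousOn_mul (continuous_pow k).continuousOn)]
  norm_num [H, neg_div]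

lemma summable_one_div_two_mul_add_one_sq :
    Summable fun n : ℕ => 1 / (2 * (n : ℝ) + 1) ^ 2 := by
  have h : Summable fun n : ℕ => 1 / ((n : ℝ) + 1) ^ 2 := by
    simpa using (summable_nat_add_iff 1).2 (Real.summable_one_div_nat_pow.2 one_lt_two)
  refine h.of_nonneg_of_le (fun n => by positivity) fun n => ?_
  gcongr
  linarith [n.cast_nonneg (α := ℝ)]

lemma integral_log_div_one_add_sq : ∫ x in (0:ℝ)..1, log x / (1 + x ^ 2) = -catalanConst := by
  set F : ℕ → ℝ → ℝ := fun n x => (-1) ^ n * (x ^ (2 * n) * log x)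
  have hIoo (f : ℝ → ℝ) : ∫ x in (0:ℝ)..1, f x = ∫ x in Ioo 0 1, f x := by
    rw [integral_of_le zero_le_one, integral_Ioc_eq_integral_Ioo]
  have hF_int (n : ℕ) : IntegrableOn (F n) (Ioo 0 1) :=
    ((intervalIntegrable_iff_integrableOn_Ioo_of_le zero_le_one).1
      (intervalIntegrable_log'.continuousOn_mul (continuous_pow (2 * n)).continuousOn)).const_mul _
  have hF_integral (n : ℕ) : ∫ x in Ioo 0 1, F n x = -((-1) ^ n / (2 * (n : ℝ) + 1) ^ 2) := by
    rw [MeasureTheory.integral_const_mul, ← hIoo, integral_pow_mul_log]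
    push_cast
    ring
  have hF_norm (n : ℕ) : ∫ x in Ioo 0 1, ‖F n x‖ = 1 / (2 * (n : ℝ) + 1) ^ 2 := by
    have h : ∀ x ∈ Ioo (0:ℝ) 1, ‖F n x‖ = -(x ^ (2 * n) * log x) := fun x hx => by
      rw [norm_mul, norm_pow, norm_neg, norm_one, one_pow, one_mul, Real.norm_eq_abs,
        abs_of_nonpos (mul_nonpos_of_nonneg_of_nonpos (pow_nonneg hx.1.le _)
          (log_nonpos hx.1.le hx.2.le))]
    rw [setIntegral_congr_fun measurableSet_Ioo h, MeasureTheory.integral_neg, ← hIoo,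
      integral_pow_mul_log]
    push_cast
    ring
  have hF_tsum : ∀ x ∈ Ioo (0:ℝ) 1, ∑' n, F n x = log x / (1 + x ^ 2) := fun x hx => by
    have hx2 : ‖-x ^ 2‖ < 1 := by
      rw [norm_neg, norm_pow, Real.norm_eq_abs, abs_of_pos hx.1]
      exact pow_lt_one₀ hx.1.le hx.2 two_ne_zero
    simp only [F, pow_mul, ← mul_assoc, ← mul_pow, neg_one_mul]
    rw [tsum_mul_right, tsum_geometric_of_norm_lt_one hx2, sub_neg_eq_add]
    ring
  calc ∫ x in (0:ℝ)..1, log x / (1 + x ^ 2) = ∫ x in Ioo 0 1, ∑' n, F n x := by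
        rw [hIoo, setIntegral_congr_fun measurableSet_Ioo hF_tsum]
    _ = ∑' n : ℕ, -((-1) ^ n / (2 * (n : ℝ) + 1) ^ 2) := by
        rw [← integral_tsum_of_summable_integral_norm hF_int
          (by simpa only [hF_norm] using summable_one_div_two_mul_add_one_sq)]
        simp only [hF_integral]
    _ = -catalanConst := tsum_neg

lemma integral_log_cos_zero_pi_div_four :
    ∫ θ in (0:ℝ)..(π / 4), log (cos θ) = -log 2 * π / 4 + catalanConst / 2 := by
  have hsin (a b : ℝ) : IntervalIntegrable (fun θ => log (sin θ)) volume a b :=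
    intervalIntegrable_log_sin
  have hsum : (∫ θ in (0:ℝ)..(π / 4), log (sin θ)) + ∫ θ in (0:ℝ)..(π / 4), log (cos θ)
      = -log 2 * π / 2 := by
    have hcos : ∫ θ in (0:ℝ)..(π / 4), log (cos θ) = ∫ θ in (π / 4)..(π / 2), log (sin θ) := by
      simp only [← sin_pi_div_two_sub, integral_comp_sub_left (fun θ => log (sin θ)) (π / 2)]
      ring_nf
    rw [hcos, integral_add_adjacent_intervals (hsin _ _) (hsin _ _),
      integral_log_sin_zero_pi_div_two]
  have hdiff : (∫ θ in (0:ℝ)..(π / 4), log (sin θ)) - ∫ θ in (0:ℝ)..(π / 4), log (cos θ)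
      = -catalanConst := by
    rw [← integral_sub (hsin _ _) (g := fun θ => log (cos θ)) intervalIntegrable_log_cos,
      ← integral_log_div_one_add_sq, ← integral_comp_tan_zero_pi_div_four]
    simp only [log_tan]
  linarith

lemma integral_log_one_add_sq_div_one_add_sq :
    ∫ x in (0:ℝ)..1, log (1 + x ^ 2) / (1 + x ^ 2) = π / 2 * log 2 - catalanConst := by
  rw [← integral_comp_tan_zero_pi_div_four fun x => log (1 + x ^ 2)]
  simp only [log_one_add_tan_sq, intervalIntegral.integral_const_mul,
    integral_log_cos_zero_pi_div_four]
  ring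

lemma hasDerivAt_mul_arctan_sq_sub_arctan_mul_log (x : ℝ) :
    HasDerivAt (fun y => y * arctan y ^ 2 - arctan y * log (1 + y ^ 2))
      (arctan x ^ 2 - log (1 + x ^ 2) / (1 + x ^ 2)) x := by
  have hx : 1 + x ^ 2 ≠ 0 := by positivity
  have hlog : HasDerivAt (fun y => log (1 + y ^ 2)) (2 * x / (1 + x ^ 2)) x := by
    simpa using ((hasDerivAt_pow 2 x).const_add 1).log hx
  refine (((hasDerivAt_id x).mul ((hasDerivAt_arctan x).pow 2)).sub
    ((hasDerivAt_arctan x).mul hlog)).congr_deriv ?_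
  simp only [id, Pi.pow_apply]
  field_simp
  ring

theorem arctan_sq_integral :
    ∫ x in (0:ℝ)..1, Real.arctan x ^ 2
      = π ^ 2 / 16 + (1/4) * π * Real.log 2 - catalanConst := by
  have harctan : Continuous fun x => arctan x ^ 2 := by fun_prop
  have hlog : Continuous fun x : ℝ => log (1 + x ^ 2) / (1 + x ^ 2) :=
    by fun_prop (disch := intros; positivity)
  have hFTC := integral_eq_sub_of_hasDerivAt
    (fun x _ => hasDerivAt_mul_arctan_sq_sub_arctan_mul_log x)
    ((harctan.sub hlog).intervalIntegrable 0 1)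
  rw [integral_sub (harctan.intervalIntegrable 0 1) (hlog.intervalIntegrable 0 1),
    integral_log_one_add_sq_div_one_add_sq] at hFTC
  norm_num [arctan_one] at hFTC
  linarith
end

section
/- The integral from 0 to 1 of arctan(x)³/x dx equals (9/8)·ζ(2)·G − (3/2)·β(4). -/
open Real

/-- `ζ(2) = ∑_{n≥1} 1/n²`. -/
noncomputable def zeta2 : ℝ := ∑' n : ℕ, 1 / ((n : ℝ) + 1) ^ 2

/-- Dirichlet beta value `β(4)`. -/
noncomputable def beta4 : ℝ := ∑' n : ℕ, (-1 : ℝ) ^ n / (2 * (n : ℝ) + 1) ^ 4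

/-!
Substituting `x = tan θ` and integrating by parts turns the integral into
`-3 ∫₀^{π/4} θ² log (tan θ) dθ`. The Fourier series `-½ log (tan θ) = ∑ cos ((4k+2)θ) / (2k+1)`
converges only conditionally, so we work with its Abel means
`∑ r^(2k+1) cos ((4k+2)θ) / (2k+1) = Re artanh (r e^{2iθ})`: for `r < 1` they can be integrated
termwise against `θ²`, each term being elementary, and as `r → 1⁻` both sides converge by dominated
convergence, since the Abel means increase to `-½ log (tan θ)`.
-/

open Set Filter Topology MeasureTheory intervalIntegral

theorem Complex.hasSum_log_one_add_div_one_sub {w : ℂ} (hw : ‖w‖ < 1) :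
    HasSum (fun k : ℕ => 2 * (1 / (2 * k + 1)) * w ^ (2 * k + 1))
      (Complex.log ((1 + w) / (1 - w))) := by
  have h := (Complex.hasSum_arctan (z := -I * w) (by simpa using hw)).mul_left (2 * I)
  have hIw : -I * w * I = w := by ring_nf; simp
  have hterm (k : ℕ) : 2 * I * ((-1) ^ k * (-I * w) ^ (2 * k + 1) / ↑(2 * k + 1))
      = 2 * (1 / (2 * k + 1)) * w ^ (2 * k + 1) := by
    have hsq : ((-1 : ℂ) ^ k) ^ 2 = 1 := by rw [← pow_mul, mul_comm, pow_mul]; norm_num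
    rw [mul_pow, pow_succ, pow_mul, neg_sq, I_sq]
    push_cast
    linear_combination (-(2 * w ^ (2 * k + 1) / (2 * k + 1)) * I ^ 2) * hsq
      - (2 * w ^ (2 * k + 1) / (2 * k + 1)) * I_sq
  rw [Complex.arctan, hIw, funext hterm] at h
  rwa [show 2 * I * (-I / 2 * log ((1 + w) / (1 - w))) = log ((1 + w) / (1 - w)) by
    ring_nf; simp] at h

/-- The real part of `artanh (r e^{it}) = ½ log ((1 + w) / (1 - w))`, using
`‖1 ± r e^{it}‖² = 1 ± 2 r cos t + r²`. -/
noncomputable def artanhRe (r t : ℝ) : ℝ :=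
  (log (1 + 2 * r * cos t + r ^ 2) - log (1 - 2 * r * cos t + r ^ 2)) / 4

theorem log_norm_one_add_ofReal_mul_exp (r t : ℝ) :
    log ‖1 + r * Complex.exp (t * Complex.I)‖ = log (1 + 2 * r * cos t + r ^ 2) / 2 := by
  rw [Complex.norm_def, Real.log_sqrt (Complex.normSq_nonneg _), Complex.normSq_apply]
  simp only [Complex.add_re, Complex.add_im, Complex.one_re, Complex.one_im,
    Complex.re_ofReal_mul, Complex.im_ofReal_mul, Complex.exp_ofReal_mul_I_re,
    Complex.exp_ofReal_mul_I_im]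
  congr 2
  linear_combination r ^ 2 * sin_sq_add_cos_sq t

theorem hasSum_artanhRe {r : ℝ} (hr : |r| < 1) (t : ℝ) :
    HasSum (fun k : ℕ => r ^ (2 * k + 1) * cos ((2 * k + 1) * t) / (2 * k + 1)) (artanhRe r t) := by
  set w : ℂ := r * Complex.exp (t * Complex.I)
  have hw : ‖w‖ < 1 := by simpa [w, Complex.norm_exp_ofReal_mul_I] using hr
  have h := Complex.hasSum_re (Complex.hasSum_log_one_add_div_one_sub hw)
  have hterm (k : ℕ) : (2 * (1 / (2 * k + 1)) * w ^ (2 * k + 1)).re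
      = 2 * (r ^ (2 * k + 1) * cos ((2 * k + 1) * t) / (2 * k + 1)) := by
    have hpow : w ^ (2 * k + 1) = ((r ^ (2 * k + 1) : ℝ) : ℂ)
        * Complex.exp (((2 * k + 1) * t : ℝ) * Complex.I) := by
      rw [mul_pow, ← Complex.exp_nat_mul]; push_cast; ring_nf
    rw [hpow, show (2 * (1 / (2 * k + 1)) : ℂ) = ((2 / (2 * k + 1) : ℝ) : ℂ) by push_cast; ring,
      Complex.re_ofReal_mul, Complex.re_ofReal_mul, Complex.exp_ofReal_mul_I_re]
    ring
  have hadd : ‖1 + w‖ ≠ 0 := norm_ne_zero_iff.mpr fun h => by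
    simp [eq_neg_of_add_eq_zero_right h] at hw
  have hsub : ‖1 - w‖ ≠ 0 := norm_ne_zero_iff.mpr fun h => by
    simp [← sub_eq_zero.mp h] at hw
  have hval : (Complex.log ((1 + w) / (1 - w))).re = 2 * artanhRe r t := by
    have hneg : 1 - w = 1 + ((-r : ℝ) : ℂ) * Complex.exp (t * Complex.I) := by simp [w]; ring
    rw [Complex.log_re, norm_div, Real.log_div hadd hsub, hneg, log_norm_one_add_ofReal_mul_exp,
      log_norm_one_add_ofReal_mul_exp, artanhRe]
    ring_nf
  rw [funext hterm, hval] at h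
  simpa using h.div_const 2

@[fun_prop]
theorem measurable_artanhRe (r : ℝ) : Measurable (artanhRe r) := by
  unfold artanhRe; fun_prop

theorem one_add_two_mul_cos_add_sq_pos {t : ℝ} (ht : sin t ≠ 0) (r : ℝ) :
    0 < 1 + 2 * r * cos t + r ^ 2 := by
  nlinarith [sin_sq_add_cos_sq t, sq_nonneg (r + cos t), pow_pos (abs_pos.mpr ht) 2, sq_abs (sin t)]

theorem one_sub_two_mul_cos_add_sq_pos {t : ℝ} (ht : sin t ≠ 0) (r : ℝ) :
    0 < 1 - 2 * r * cos t + r ^ 2 := by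
  simpa [sub_eq_add_neg] using one_add_two_mul_cos_add_sq_pos ht (-r)

theorem continuous_artanhRe_left {t : ℝ} (ht : sin t ≠ 0) : Continuous fun r => artanhRe r t := by
  unfold artanhRe
  fun_prop (disch := first
    | exact fun r => (one_add_two_mul_cos_add_sq_pos ht r).ne'
    | exact fun r => (one_sub_two_mul_cos_add_sq_pos ht r).ne')

theorem monotoneOn_artanhRe_left {t : ℝ} (hc0 : 0 ≤ cos t) (hc1 : cos t < 1) :
    MonotoneOn (fun r => artanhRe r t) (Icc 0 1) := by
  intro r hr s hs hrs
  have hplus (u : ℝ) (hu : u ∈ Icc (0 : ℝ) 1) : 0 < 1 + 2 * u * cos t + u ^ 2 := by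
    nlinarith [mul_nonneg hu.1 hc0]
  have hminus (u : ℝ) (hu : u ∈ Icc (0 : ℝ) 1) : 0 < 1 - 2 * u * cos t + u ^ 2 := by
    nlinarith [mul_nonneg hu.1 (sub_nonneg.2 hc1.le), sq_nonneg (1 - u), hu.2]
  -- the difference of the two sides is `4 cos t (s - r) (1 - r s)`
  have hcross : (1 + 2 * r * cos t + r ^ 2) * (1 - 2 * s * cos t + s ^ 2)
      ≤ (1 + 2 * s * cos t + s ^ 2) * (1 - 2 * r * cos t + r ^ 2) := by
    nlinarith [mul_nonneg (mul_nonneg hc0 (sub_nonneg.2 hrs))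
      (sub_nonneg.2 (mul_le_one₀ hr.2 hs.1 hs.2))]
  have hlog := Real.log_le_log (mul_pos (hplus r hr) (hminus s hs)) hcross
  rw [Real.log_mul (hplus r hr).ne' (hminus s hs).ne',
    Real.log_mul (hplus s hs).ne' (hminus r hr).ne'] at hlog
  simp only [artanhRe]
  linarith

theorem artanhRe_one_two_mul {θ : ℝ} (h0 : 0 < θ) (h1 : θ < π / 2) :
    artanhRe 1 (2 * θ) = -log (tan θ) / 2 := by
  have hs : 0 < sin θ := sin_pos_of_pos_of_lt_pi h0 (by linarith [pi_pos])
  have hc : 0 < cos θ := cos_pos_of_mem_Ioo ⟨by linarith, h1⟩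
  have hplus : 1 + 2 * 1 * cos (2 * θ) + 1 ^ 2 = (2 * cos θ) ^ 2 := by
    rw [cos_two_mul]; ring
  have hminus : 1 - 2 * 1 * cos (2 * θ) + 1 ^ 2 = (2 * sin θ) ^ 2 := by
    rw [cos_two_mul, cos_sq']; ring
  rw [artanhRe, hplus, hminus, Real.log_pow, Real.log_pow, Real.log_mul two_ne_zero hc.ne',
    Real.log_mul two_ne_zero hs.ne', tan_eq_sin_div_cos, Real.log_div hs.ne' hc.ne']
  push_cast
  ring

theorem hasSum_integral_mul_artanhRe {f : ℝ → ℝ} {a b : ℝ} (hf : IntervalIntegrable f volume a b)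
    {r : ℝ} (hr : |r| < 1) (c : ℝ) :
    HasSum (fun k : ℕ =>
        ∫ θ in a..b, f θ * (r ^ (2 * k + 1) * cos ((2 * k + 1) * (c * θ)) / (2 * k + 1)))
      (∫ θ in a..b, f θ * artanhRe r (c * θ)) := by
  have hgeom : Summable fun k : ℕ => |r| ^ (2 * k + 1) := by
    simpa [pow_succ, pow_mul] using
      (summable_geometric_of_lt_one (sq_nonneg |r|) (by nlinarith [abs_nonneg r])).mul_right |r|
  refine hasSum_integral_of_dominated_convergence (fun k θ => |f θ| * |r| ^ (2 * k + 1))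
    (fun k => hf.def'.aestronglyMeasurable.mul (by fun_prop : Continuous _).aestronglyMeasurable)
    (fun k => ae_of_all _ fun θ _ => ?_) (ae_of_all _ fun θ _ => hgeom.mul_left _) ?_
    (ae_of_all _ fun θ _ => (hasSum_artanhRe hr _).mul_left (f θ))
  · have hk : (1 : ℝ) ≤ 2 * k + 1 := by linarith [k.cast_nonneg (α := ℝ)]
    rw [norm_mul, norm_div, norm_mul, norm_pow, Real.norm_eq_abs, Real.norm_eq_abs,
      Real.norm_eq_abs, Real.norm_eq_abs, abs_of_pos (by linarith : (0 : ℝ) < 2 * k + 1)]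
    gcongr
    rw [div_le_iff₀ (by linarith)]
    nlinarith [abs_cos_le_one ((2 * k + 1) * (c * θ)), pow_nonneg (abs_nonneg r) (2 * k + 1)]
  · simp_rw [tsum_mul_left]
    exact hf.abs.mul_const _

theorem integral_sq_mul_cos {m : ℝ} (hm : m ≠ 0) (b : ℝ) :
    ∫ θ in (0 : ℝ)..b, θ ^ 2 * cos (m * θ)
      = b ^ 2 * sin (m * b) / m + 2 * b * cos (m * b) / m ^ 2 - 2 * sin (m * b) / m ^ 3 := by
  have hderiv (θ : ℝ) : HasDerivAt
      (fun t => t ^ 2 * sin (m * t) / m + 2 * t * cos (m * t) / m ^ 2 - 2 * sin (m * t) / m ^ 3)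
      (θ ^ 2 * cos (m * θ)) θ := by
    have hlin : HasDerivAt (fun t => m * t) m θ := by simpa using (hasDerivAt_id θ).const_mul m
    refine (((((hasDerivAt_pow 2 θ).mul hlin.sin).div_const m).add
      ((((hasDerivAt_id θ).const_mul 2).mul hlin.cos).div_const (m ^ 2))).sub
      ((hlin.sin.const_mul 2).div_const (m ^ 3))).congr_deriv ?_
    field_simp
    simp only [id]
    ring
  rw [integral_eq_sub_of_hasDerivAt (fun θ _ => hderiv θ)
    ((by fun_prop : Continuous _).intervalIntegrable _ _)]
  simp

theorem integral_sq_mul_cos_odd_mul_two (k : ℕ) :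
    ∫ θ in (0 : ℝ)..π / 4, θ ^ 2 * cos ((2 * k + 1) * (2 * θ))
      = (-1) ^ k * (π ^ 2 / (32 * (2 * k + 1)) - 1 / (4 * (2 * k + 1) ^ 3)) := by
  have harg : (2 * k + 1) * 2 * (π / 4) = k * π + π / 2 := by ring
  have hsin : sin ((2 * k + 1) * 2 * (π / 4)) = (-1) ^ k := by
    rw [harg, sin_add_pi_div_two, cos_nat_mul_pi]
  have hcos : cos ((2 * k + 1) * 2 * (π / 4)) = 0 := by
    rw [harg, cos_add_pi_div_two, sin_nat_mul_pi, neg_zero]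
  simp_rw [← mul_assoc]
  rw [integral_sq_mul_cos (by positivity), hsin, hcos]
  field_simp
  ring

theorem hasSum_integral_sq_mul_artanhRe {r : ℝ} (hr : |r| < 1) :
    HasSum (fun k : ℕ => r ^ (2 * k + 1) *
        (π ^ 2 / 32 * ((-1) ^ k / (2 * k + 1) ^ 2) - 1 / 4 * ((-1) ^ k / (2 * k + 1) ^ 4)))
      (∫ θ in (0 : ℝ)..π / 4, θ ^ 2 * artanhRe r (2 * θ)) := by
  convert hasSum_integral_mul_artanhRe (f := fun θ => θ ^ 2)
    ((continuous_pow 2).intervalIntegrable _ _) hr 2 using 2 with k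
  have hk : (2 * k + 1 : ℝ) ≠ 0 := by positivity
  have hintegrand : (fun θ : ℝ =>
      θ ^ 2 * (r ^ (2 * k + 1) * cos ((2 * k + 1) * (2 * θ)) / (2 * k + 1)))
      = fun θ => r ^ (2 * k + 1) / (2 * k + 1) * (θ ^ 2 * cos ((2 * k + 1) * (2 * θ))) := by
    funext θ; ring
  rw [hintegrand, intervalIntegral.integral_const_mul, integral_sq_mul_cos_odd_mul_two]
  field_simp

theorem abs_log_tan_le_inv {θ : ℝ} (h0 : 0 < θ) (h1 : θ ≤ π / 4) : |log (tan θ)| ≤ θ⁻¹ := by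
  have hlt : θ < π / 2 := by linarith [pi_pos]
  have htan_le_one : tan θ ≤ 1 := tan_pi_div_four ▸ strictMonoOn_tan.monotoneOn
    ⟨by linarith, hlt⟩ ⟨by linarith [pi_pos], by linarith [pi_pos]⟩ h1
  have hle_tan : θ ≤ tan θ := le_tan h0.le hlt
  rw [abs_le]
  constructor
  · linarith [one_sub_inv_le_log_of_pos h0, log_le_log h0 hle_tan]
  · linarith [log_nonpos (h0.le.trans hle_tan) htan_le_one, inv_pos.mpr h0]

theorem continuousOn_pow_mul_log_tan {n : ℕ} (hn : 2 ≤ n) :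
    ContinuousOn (fun θ => θ ^ n * log (tan θ)) (Icc 0 (π / 4)) := by
  intro θ hθ
  rcases hθ.1.eq_or_lt with rfl | hpos
  · have hbound : ∀ x ∈ Icc (0 : ℝ) (π / 4), ‖x ^ n * log (tan x)‖ ≤ x ^ (n - 1) := by
      intro x hx
      rcases hx.1.eq_or_lt with rfl | hx0
      · simp [zero_pow (by omega : n ≠ 0)]
      · rw [norm_mul, norm_pow, Real.norm_eq_abs, Real.norm_eq_abs, abs_of_pos hx0,
          ← pow_sub_one_mul (by omega : n ≠ 0)]
        calc x ^ (n - 1) * x * |log (tan x)| ≤ x ^ (n - 1) * x * x⁻¹ := by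
              gcongr; exact abs_log_tan_le_inv hx0 hx.2
          _ = x ^ (n - 1) := by field_simp
    have hlim : Tendsto (fun x : ℝ => x ^ (n - 1)) (𝓝[Icc 0 (π / 4)] 0) (𝓝 0) :=
      ((continuous_pow (n - 1)).tendsto' 0 0 (zero_pow (by omega))).mono_left nhdsWithin_le_nhds
    simpa [ContinuousWithinAt, zero_pow (by omega : n ≠ 0)] using
      squeeze_zero_norm' (eventually_nhdsWithin_of_forall hbound) hlim
  · have hlt : θ < π / 2 := by linarith [hθ.2, pi_pos]
    have hcos : cos θ ≠ 0 := (cos_pos_of_mem_Ioo ⟨by linarith [pi_pos], hlt⟩).ne'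
    have htan : tan θ ≠ 0 := (tan_pos_of_pos_of_lt_pi_div_two hpos hlt).ne'
    exact ((continuousAt_pow θ n).mul ((continuousAt_tan.mpr hcos).log htan)).continuousWithinAt

theorem intervalIntegrable_sq_mul_log_tan :
    IntervalIntegrable (fun θ => θ ^ 2 * log (tan θ)) volume 0 (π / 4) :=
  (continuousOn_pow_mul_log_tan le_rfl).intervalIntegrable_of_Icc (by positivity)

theorem tendsto_integral_sq_mul_artanhRe :
    Tendsto (fun r => ∫ θ in (0 : ℝ)..π / 4, θ ^ 2 * artanhRe r (2 * θ)) (𝓝[<] 1)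
      (𝓝 (-(∫ θ in (0 : ℝ)..π / 4, θ ^ 2 * log (tan θ)) / 2)) := by
  have hpi : 0 ≤ π / 4 := by positivity
  have hcos {θ : ℝ} (hθ : θ ∈ Ioc 0 (π / 4)) :
      0 ≤ cos (2 * θ) ∧ cos (2 * θ) < 1 ∧ sin (2 * θ) ≠ 0 := by
    have hsin : 0 < sin (2 * θ) :=
      sin_pos_of_pos_of_lt_pi (by linarith [hθ.1]) (by linarith [hθ.2, pi_pos])
    exact ⟨cos_nonneg_of_mem_Icc ⟨by linarith [hθ.1, pi_pos], by linarith [hθ.2]⟩,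
      by nlinarith [sin_sq_add_cos_sq (2 * θ)], hsin.ne'⟩
  have hlimit {θ : ℝ} (hθ : θ ∈ Ioc 0 (π / 4)) :
      θ ^ 2 * artanhRe 1 (2 * θ) = -(θ ^ 2 * log (tan θ)) / 2 := by
    rw [artanhRe_one_two_mul hθ.1 (by linarith [hθ.2, pi_pos])]; ring
  rw [← intervalIntegral.integral_neg, ← intervalIntegral.integral_div]
  refine tendsto_integral_filter_of_dominated_convergence (fun θ => -(θ ^ 2 * log (tan θ)) / 2)
    (Eventually.of_forall fun r => (by fun_prop : Measurable _).aestronglyMeasurable)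
    ?_ (intervalIntegrable_sq_mul_log_tan.neg.div_const 2) ?_
  · filter_upwards [Ioo_mem_nhdsLT one_pos] with r hr
    refine ae_of_all _ fun θ hθ => ?_
    rw [uIoc_of_le hpi] at hθ
    obtain ⟨hc0, hc1, -⟩ := hcos hθ
    have hmono := monotoneOn_artanhRe_left hc0 hc1
    have hnonneg : 0 ≤ artanhRe r (2 * θ) := by
      simpa [artanhRe] using hmono ⟨le_rfl, zero_le_one⟩ ⟨hr.1.le, hr.2.le⟩ hr.1.le
    rw [← hlimit hθ, norm_mul, norm_pow, Real.norm_eq_abs, sq_abs, Real.norm_of_nonneg hnonneg]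
    exact mul_le_mul_of_nonneg_left (hmono ⟨hr.1.le, hr.2.le⟩ ⟨zero_le_one, le_rfl⟩ hr.2.le)
      (sq_nonneg θ)
  · refine ae_of_all _ fun θ hθ => ?_
    rw [uIoc_of_le hpi] at hθ
    rw [← hlimit hθ]
    exact (((continuous_artanhRe_left (hcos hθ).2.2).tendsto 1).mono_left
      nhdsWithin_le_nhds).const_mul _

theorem tendsto_tsum_pow_mul_nhdsLT_one {a : ℕ → ℝ} (ha : Summable a) (m : ℕ → ℕ) :
    Tendsto (fun r => ∑' k, r ^ m k * a k) (𝓝[<] 1) (𝓝 (∑' k, a k)) := by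
  refine tendsto_tsum_of_dominated_convergence (summable_abs_iff.mpr ha) (fun k => ?_) ?_
  · simpa using (((continuous_pow (m k)).tendsto 1).mono_left nhdsWithin_le_nhds).mul_const (a k)
  · filter_upwards [Ioo_mem_nhdsLT one_pos] with r hr k
    rw [norm_mul, norm_pow, Real.norm_of_nonneg hr.1.le, Real.norm_eq_abs]
    exact mul_le_of_le_one_left (abs_nonneg _) (pow_le_one₀ hr.1.le hr.2.le)

theorem summable_neg_one_pow_div_two_mul_add_one_pow {p : ℕ} (hp : 2 ≤ p) :
    Summable fun k : ℕ => (-1 : ℝ) ^ k / (2 * k + 1) ^ p := by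
  refine Summable.of_norm_bounded (g := fun k : ℕ => 1 / ((k : ℝ) + 1) ^ p) ?_ fun k => ?_
  · exact_mod_cast (summable_nat_add_iff 1).mpr (Real.summable_one_div_nat_pow.mpr (by omega))
  · rw [norm_div, norm_pow, norm_neg, norm_one, one_pow, norm_pow,
      Real.norm_of_nonneg (by positivity)]
    gcongr
    linarith [k.cast_nonneg (α := ℝ)]

theorem hasSum_catalan_beta4 :
    HasSum (fun k : ℕ =>
        π ^ 2 / 32 * ((-1) ^ k / (2 * k + 1) ^ 2) - 1 / 4 * ((-1) ^ k / (2 * k + 1) ^ 4))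
      (π ^ 2 / 32 * catalanConst - 1 / 4 * beta4) :=
  ((summable_neg_one_pow_div_two_mul_add_one_pow le_rfl).hasSum.mul_left _).sub
    ((summable_neg_one_pow_div_two_mul_add_one_pow (by norm_num)).hasSum.mul_left _)

theorem integral_sq_mul_log_tan :
    ∫ θ in (0 : ℝ)..π / 4, θ ^ 2 * log (tan θ) = -(π ^ 2 / 16 * catalanConst - 1 / 2 * beta4) := by
  have habel := tendsto_tsum_pow_mul_nhdsLT_one hasSum_catalan_beta4.summable (fun k => 2 * k + 1)
  rw [hasSum_catalan_beta4.tsum_eq] at habel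
  have hlim := tendsto_integral_sq_mul_artanhRe.congr' <| by
    filter_upwards [Ioo_mem_nhdsLT one_pos] with r hr
    exact (hasSum_integral_sq_mul_artanhRe (abs_lt.mpr ⟨by linarith [hr.1], hr.2⟩)).tsum_eq.symm
  linarith [tendsto_nhds_unique hlim habel]

theorem Ioc_zero_pi_div_four_subset_Ioo : Ioc 0 (π / 4) ⊆ Ioo (-(π / 2)) (π / 2) :=
  fun θ hθ => ⟨by linarith [hθ.1, pi_pos], by linarith [hθ.2, pi_pos]⟩

theorem image_tan_Ioc_pi_div_four : tan '' Ioc 0 (π / 4) = Ioc 0 1 := by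
  ext x
  constructor
  · rintro ⟨θ, hθ, rfl⟩
    exact ⟨tan_pos_of_pos_of_lt_pi_div_two hθ.1 (Ioc_zero_pi_div_four_subset_Ioo hθ).2,
      tan_pi_div_four ▸ strictMonoOn_tan.monotoneOn (Ioc_zero_pi_div_four_subset_Ioo hθ)
        (Ioc_zero_pi_div_four_subset_Ioo ⟨by positivity, le_rfl⟩) hθ.2⟩
  · intro hx
    exact ⟨arctan x, ⟨arctan_pos.mpr hx.1, arctan_one ▸ arctan_strictMono.monotone hx.2⟩,
      tan_arctan x⟩

theorem setIntegral_Ioc_zero_one_eq_tan (g : ℝ → ℝ) :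
    ∫ x in Ioc 0 1, g x = ∫ θ in Ioc 0 (π / 4), 1 / cos θ ^ 2 * g (tan θ) := by
  rw [← image_tan_Ioc_pi_div_four, integral_image_eq_integral_abs_deriv_smul measurableSet_Ioc
    (fun θ hθ =>
      (hasDerivAt_tan (cos_pos_of_mem_Ioo (Ioc_zero_pi_div_four_subset_Ioo hθ)).ne').hasDerivWithinAt)
    (strictMonoOn_tan.injOn.mono Ioc_zero_pi_div_four_subset_Ioo)]
  simp_rw [abs_div, abs_one, abs_pow, sq_abs, smul_eq_mul]

theorem integrableOn_Ioc_zero_one_iff_tan (g : ℝ → ℝ) :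
    IntegrableOn g (Ioc 0 1) ↔
      IntegrableOn (fun θ => 1 / cos θ ^ 2 * g (tan θ)) (Ioc 0 (π / 4)) := by
  rw [← image_tan_Ioc_pi_div_four, integrableOn_image_iff_integrableOn_abs_deriv_smul
    measurableSet_Ioc
    (fun θ hθ =>
      (hasDerivAt_tan (cos_pos_of_mem_Ioo (Ioc_zero_pi_div_four_subset_Ioo hθ)).ne').hasDerivWithinAt)
    (strictMonoOn_tan.injOn.mono Ioc_zero_pi_div_four_subset_Ioo)]
  simp_rw [abs_div, abs_one, abs_pow, sq_abs, smul_eq_mul]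

theorem arctan_le_self {x : ℝ} (hx : 0 ≤ x) : arctan x ≤ x := by
  simpa using le_tan (arctan_nonneg.mpr hx) (arctan_lt_pi_div_two x)

theorem integrableOn_arctan_cube_div : IntegrableOn (fun x => arctan x ^ 3 / x) (Ioc 0 1) := by
  refine IntegrableOn.of_bound measure_Ioc_lt_top
    (by fun_prop : Measurable _).aestronglyMeasurable 1
    ((ae_restrict_iff' measurableSet_Ioc).mpr (ae_of_all _ fun x hx => ?_))
  have harctan := arctan_le_self hx.1.le
  have hnonneg := arctan_nonneg.mpr hx.1.le
  rw [Real.norm_of_nonneg (div_nonneg (pow_nonneg hnonneg 3) hx.1.le), div_le_one hx.1]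
  calc arctan x ^ 3 ≤ x ^ 3 := by gcongr
    _ ≤ x := by nlinarith [hx.1, hx.2, pow_le_one₀ hx.1.le hx.2 (n := 2)]

theorem arctan_cube_div_comp_tan {θ : ℝ} (hθ : θ ∈ Ioc 0 (π / 4)) :
    1 / cos θ ^ 2 * (arctan (tan θ) ^ 3 / tan θ) = θ ^ 3 * (1 / cos θ ^ 2 / tan θ) := by
  rw [arctan_tan (Ioc_zero_pi_div_four_subset_Ioo hθ).1 (Ioc_zero_pi_div_four_subset_Ioo hθ).2]
  ring

theorem integral_arctan_cube_div_eq :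
    ∫ x in (0 : ℝ)..1, arctan x ^ 3 / x
      = ∫ θ in (0 : ℝ)..π / 4, θ ^ 3 * (1 / cos θ ^ 2 / tan θ) := by
  rw [integral_of_le zero_le_one, integral_of_le (by positivity), setIntegral_Ioc_zero_one_eq_tan]
  exact setIntegral_congr_fun measurableSet_Ioc fun θ hθ => arctan_cube_div_comp_tan hθ

theorem intervalIntegrable_cube_mul_deriv_log_tan :
    IntervalIntegrable (fun θ => θ ^ 3 * (1 / cos θ ^ 2 / tan θ)) volume 0 (π / 4) := by
  rw [intervalIntegrable_iff_integrableOn_Ioc_of_le (by positivity)]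
  exact ((integrableOn_Ioc_zero_one_iff_tan _).mp integrableOn_arctan_cube_div).congr_fun
    (fun θ hθ => arctan_cube_div_comp_tan hθ) measurableSet_Ioc

theorem integral_cube_mul_deriv_log_tan :
    ∫ θ in (0 : ℝ)..π / 4, θ ^ 3 * (1 / cos θ ^ 2 / tan θ)
      = -3 * ∫ θ in (0 : ℝ)..π / 4, θ ^ 2 * log (tan θ) := by
  have hderiv : ∀ θ ∈ Ioo 0 (π / 4), HasDerivAt (fun θ => θ ^ 3 * log (tan θ))
      (3 * (θ ^ 2 * log (tan θ)) + θ ^ 3 * (1 / cos θ ^ 2 / tan θ)) θ := by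
    intro θ hθ
    have hθ' := Ioc_zero_pi_div_four_subset_Ioo (Ioo_subset_Ioc_self hθ)
    have htan : tan θ ≠ 0 := (tan_pos_of_pos_of_lt_pi_div_two hθ.1 hθ'.2).ne'
    exact ((hasDerivAt_pow 3 θ).mul
      ((hasDerivAt_tan (cos_pos_of_mem_Ioo hθ').ne').log htan)).congr_deriv (by norm_num; ring)
  have hint3 := intervalIntegrable_sq_mul_log_tan.const_mul 3
  have hftc := integral_eq_sub_of_hasDerivAt_of_le (by positivity)
    (continuousOn_pow_mul_log_tan (by norm_num)) hderiv
    (hint3.add intervalIntegrable_cube_mul_deriv_log_tan)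
  rw [integral_add hint3 intervalIntegrable_cube_mul_deriv_log_tan,
    intervalIntegral.integral_const_mul] at hftc
  simp only [tan_pi_div_four, tan_zero, log_one, log_zero, mul_zero, sub_zero] at hftc
  linarith

theorem zeta2_eq_pi_sq_div_six : zeta2 = π ^ 2 / 6 := by
  have h := (hasSum_nat_add_iff' 1).mpr hasSum_zeta_two
  simp only [Finset.sum_range_one, Nat.cast_zero, zero_pow two_ne_zero, div_zero, sub_zero,
    Nat.cast_add_one] at h
  exact h.tsum_eq

theorem arctan_cube_div_x_integral :
    ∫ x in (0:ℝ)..1, Real.arctan x ^ 3 / x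
      = (9/8) * zeta2 * catalanConst - (3/2) * beta4 := by
  rw [integral_arctan_cube_div_eq, integral_cube_mul_deriv_log_tan, integral_sq_mul_log_tan,
    zeta2_eq_pi_sq_div_six]
  ring
end

section
/- The integral from 0 to 1 of arctan(x)⁴/x dx equals (93/32)·ζ(5) − (3/2)·π·β(4) + (1/16)·π³·G. -/
open Real

/-- `ζ(5) = ∑_{n≥1} 1/n⁵`. -/
noncomputable def zeta5 : ℝ := ∑' n : ℕ, 1 / ((n : ℝ) + 1) ^ 5

/-!
The substitution `x = tan (s / 2)` turns the integral into `(1/16) ∫₀^{π/2} s⁴ / sin s ds`.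
Since `sin s · ∑_{k<N} 2 sin ((2k+1) s) = 1 - cos (2Ns)`, the expansion
`1 / sin s = 2 ∑ sin ((2k+1) s)` holds after integration against `s⁴`, up to the remainder
`∫ (s⁴ / sin s) cos (2Ns) ds`, which tends to `0` by the Riemann–Lebesgue lemma. The terms
`2 ∫₀^{π/2} s⁴ sin ((2k+1) s) ds` are elementary and contribute
`(-1)ᵏ π³ / (2k+1)² - 24 π (-1)ᵏ / (2k+1)⁴ + 48 / (2k+1)⁵`; summing over `k` gives
`π³ G - 24 π β(4) + 48 · (31/32) ζ(5)`.
-/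

open Filter Topology MeasureTheory Set

theorem tendsto_integral_mul_cos_atTop {g : ℝ → ℝ} (hg : Integrable g) :
    Tendsto (fun ω : ℝ => ∫ s, g s * cos (ω * s)) atTop (𝓝 0) := by
  have h := (Complex.continuous_re.tendsto 0).comp
    (Real.tendsto_integral_exp_smul_cocompact (fun v => (g v : ℂ)))
  have hω : Tendsto (fun ω : ℝ => -(ω / (2 * π))) atTop (cocompact ℝ) :=
    (tendsto_neg_atTop_atBot.comp (tendsto_id.atTop_div_const (by positivity))).mono_right
      atBot_le_cocompact
  rw [Complex.zero_re] at h
  refine (h.comp hω).congr fun ω => ?_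
  have hint : Integrable (fun v : ℝ => Real.fourierChar (-(v * -(ω / (2 * π)))) • (g v : ℂ)) := by
    simpa [mul_comm] using
      (Real.fourierIntegral_convergent_iff (-(ω / (2 * π)))).2 hg.ofReal
  simp only [Function.comp_apply]
  rw [← RCLike.re_to_complex, ← integral_re hint]
  congr 1 with s
  rw [Circle.smul_def, Real.fourierChar_apply]
  simp only [RCLike.re_to_complex, smul_eq_mul, Complex.re_mul_ofReal]
  rw [Complex.exp_ofReal_mul_I_re, mul_comm]
  congr 2
  field_simp

theorem tendsto_intervalIntegral_mul_cos_atTop {g : ℝ → ℝ} {a b : ℝ}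
    (hg : IntervalIntegrable g volume a b) :
    Tendsto (fun ω : ℝ => ∫ s in a..b, g s * cos (ω * s)) atTop (𝓝 0) := by
  have hset {t : Set ℝ} (ht : MeasurableSet t) (hgt : IntegrableOn g t) :
      Tendsto (fun ω : ℝ => ∫ s in t, g s * cos (ω * s)) atTop (𝓝 0) := by
    simpa only [← integral_indicator ht, indicator_mul_left] using
      tendsto_integral_mul_cos_atTop ((integrable_indicator_iff ht).2 hgt)
  simpa only [intervalIntegral, sub_zero] using
    (hset measurableSet_Ioc hg.1).sub (hset measurableSet_Ioc hg.2)

theorem sin_mul_sum_sin_odd (N : ℕ) (s : ℝ) :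
    sin s * ∑ k ∈ Finset.range N, 2 * sin ((2 * k + 1) * s) = 1 - cos (2 * N * s) := by
  induction N with
  | zero => simp
  | succ n ih =>
    rw [Finset.sum_range_succ, mul_add, ih]
    push_cast
    have h1 : 2 * ((n : ℝ) + 1) * s = 2 * n * s + 2 * s := by ring
    have h2 : (2 * (n : ℝ) + 1) * s = 2 * n * s + s := by ring
    rw [h1, h2, cos_add, sin_add, cos_two_mul, sin_two_mul]
    linear_combination 2 * cos (2 * n * s) * sin_sq_add_cos_sq s

theorem ae_sin_ne_zero : ∀ᵐ s : ℝ, sin s ≠ 0 := by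
  have : {s : ℝ | sin s = 0} = range (fun n : ℤ => n * π) := by
    ext s; simp [sin_eq_zero_iff]
  rw [ae_iff]
  simpa [this] using (countable_range _).measure_zero volume

theorem tendsto_sum_two_mul_integral_mul_sin_odd {f : ℝ → ℝ} {a b : ℝ}
    (hf : IntervalIntegrable f volume a b)
    (hfs : IntervalIntegrable (fun s => f s / sin s) volume a b) :
    Tendsto (fun N : ℕ => ∑ k ∈ Finset.range N, 2 * ∫ s in a..b, f s * sin ((2 * k + 1) * s))
      atTop (𝓝 (∫ s in a..b, f s / sin s)) := by
  have hterm (k : ℕ) :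
      IntervalIntegrable (fun s => 2 * (f s * sin ((2 * k + 1) * s))) volume a b :=
    (hf.mul_continuousOn (by fun_prop)).const_mul 2
  have hrem (N : ℕ) : (∫ s in a..b, f s / sin s)
      - ∑ k ∈ Finset.range N, 2 * ∫ s in a..b, f s * sin ((2 * k + 1) * s)
      = ∫ s in a..b, f s / sin s * cos ((2 * N : ℝ) * s) := by
    simp_rw [← intervalIntegral.integral_const_mul]
    have hsum : IntervalIntegrable
        (fun s => ∑ k ∈ Finset.range N, 2 * (f s * sin ((2 * k + 1) * s))) volume a b := by
      simpa only [Finset.sum_fn] using IntervalIntegrable.sum _ fun k _ => hterm k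
    rw [← intervalIntegral.integral_finsetSum fun k _ => hterm k,
      ← intervalIntegral.integral_sub hfs hsum]
    refine intervalIntegral.integral_congr_ae (ae_sin_ne_zero.mono fun s hs _ => ?_)
    have hfactor : ∑ k ∈ Finset.range N, 2 * (f s * sin ((2 * k + 1) * s))
        = f s * ∑ k ∈ Finset.range N, 2 * sin ((2 * k + 1) * s) := by
      rw [Finset.mul_sum]
      exact Finset.sum_congr rfl fun k _ => by ring
    have hcos : cos (2 * N * s) = 1 - sin s * ∑ k ∈ Finset.range N, 2 * sin ((2 * k + 1) * s) := by
      linarith [sin_mul_sum_sin_odd N s]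
    rw [hfactor, hcos, mul_sub, mul_one, ← mul_assoc, div_mul_cancel₀ _ hs]
  have hR := (tendsto_intervalIntegral_mul_cos_atTop hfs).comp
    ((tendsto_natCast_atTop_atTop (R := ℝ)).const_mul_atTop two_pos)
  simpa [← hrem] using (tendsto_const_nhds (x := ∫ s in a..b, f s / sin s)).sub hR

theorem sinc_pos_of_nonneg_of_lt_pi {x : ℝ} (h0 : 0 ≤ x) (hπ : x < π) : 0 < sinc x := by
  rcases h0.eq_or_lt with rfl | hx
  · simp [sinc_zero]
  · rw [sinc_of_ne_zero hx.ne']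
    exact div_pos (sin_pos_of_pos_of_lt_pi hx hπ) hx

theorem intervalIntegrable_pow_succ_div_sin (n : ℕ) :
    IntervalIntegrable (fun s => s ^ (n + 1) / sin s) volume 0 (π / 2) := by
  have hπ : (0 : ℝ) ≤ π / 2 := by positivity
  have hsinc : EqOn (fun s => s ^ (n + 1) / sin s) (fun s => s ^ n / sinc s) (uIoc 0 (π / 2)) :=
    fun s hs => by
      dsimp only
      rw [sinc_of_ne_zero (uIoc_of_le hπ ▸ hs).1.ne', pow_succ]
      field_simp
  refine (intervalIntegrable_congr hsinc).2 (ContinuousOn.intervalIntegrable ?_)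
  refine (continuous_pow n).continuousOn.div continuous_sinc.continuousOn fun s hs => ?_
  rw [uIcc_of_le hπ] at hs
  exact (sinc_pos_of_nonneg_of_lt_pi hs.1 (by linarith [hs.2, pi_pos])).ne'

theorem integral_arctan_pow_div_self (n : ℕ) :
    ∫ x in (0 : ℝ)..1, arctan x ^ n / x = (∫ s in (0 : ℝ)..π / 2, s ^ n / sin s) / 2 ^ n := by
  have hπ : (0 : ℝ) ≤ π / 2 := by positivity
  have hcos {s : ℝ} (hs : s ∈ Icc 0 (π / 2)) : 0 < cos (s / 2) :=
    cos_pos_of_mem_Ioo ⟨by linarith [hs.1, pi_pos], by linarith [hs.2, pi_pos]⟩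
  have hderiv {s : ℝ} (hs : s ∈ Icc 0 (π / 2)) :
      HasDerivAt (fun s => tan (s / 2)) (1 / cos (s / 2) ^ 2 * (1 / 2)) s :=
    HasDerivAt.comp (h₂ := tan) s (hasDerivAt_tan (hcos hs).ne') ((hasDerivAt_id' s).div_const 2)
  have hsub := intervalIntegral.integral_comp_mul_deriv_of_deriv_nonneg
    (g := fun x => arctan x ^ n / x)
    (fun s hs => (hderiv (uIcc_of_le hπ ▸ hs)).continuousAt.continuousWithinAt)
    (fun s hs => hderiv (Ioo_subset_Icc_self (by simpa [hπ] using hs)))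
    (fun s _ => by positivity)
  rw [zero_div, tan_zero, show π / 2 / 2 = π / 4 by ring, tan_pi_div_four] at hsub
  rw [← hsub, ← intervalIntegral.integral_div]
  refine intervalIntegral.integral_congr fun s hs => ?_
  rw [uIcc_of_le hπ] at hs
  rcases hs.1.eq_or_lt with rfl | hs0
  · simp
  have hsin : 0 < sin (s / 2) := sin_pos_of_pos_of_lt_pi (by positivity) (by linarith [hs.2])
  have hcos' := hcos hs
  rw [show sin s = sin (2 * (s / 2)) by ring_nf, sin_two_mul]
  simp only [Function.comp_apply]
  rw [arctan_tan (by linarith) (by linarith [hs.2]), tan_eq_sin_div_cos]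
  field_simp
  rw [← mul_pow, div_mul_cancel₀ _ two_ne_zero]

theorem hasDerivAt_antideriv_pow_four_mul_sin {m : ℝ} (hm : m ≠ 0) (s : ℝ) :
    HasDerivAt (fun s => (-s ^ 4 / m + 12 * s ^ 2 / m ^ 3 - 24 / m ^ 5) * cos (m * s)
      + (4 * s ^ 3 / m ^ 2 - 24 * s / m ^ 4) * sin (m * s)) (s ^ 4 * sin (m * s)) s := by
  have hms : HasDerivAt (fun s => m * s) m s := by simpa using (hasDerivAt_id' s).const_mul m
  have hp : HasDerivAt (fun s => -s ^ 4 / m + 12 * s ^ 2 / m ^ 3 - 24 / m ^ 5)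
      (-(4 * s ^ 3) / m + 12 * (2 * s) / m ^ 3) s := by
    simpa using (((hasDerivAt_pow 4 s).neg.div_const m).add
      (((hasDerivAt_pow 2 s).const_mul 12).div_const (m ^ 3))).sub_const (24 / m ^ 5)
  have hq : HasDerivAt (fun s => 4 * s ^ 3 / m ^ 2 - 24 * s / m ^ 4)
      (4 * (3 * s ^ 2) / m ^ 2 - 24 / m ^ 4) s := by
    simpa using (((hasDerivAt_pow 3 s).const_mul 4).div_const (m ^ 2)).fun_sub
      (((hasDerivAt_id' s).const_mul 24).div_const (m ^ 4))
  refine ((hp.fun_mul hms.cos).fun_add (hq.fun_mul hms.sin)).congr_deriv ?_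
  field_simp
  ring

theorem integral_pow_four_mul_sin_odd (k : ℕ) :
    ∫ s in (0 : ℝ)..π / 2, s ^ 4 * sin ((2 * k + 1) * s)
      = (-1) ^ k * (π ^ 3 / (2 * (2 * k + 1) ^ 2) - 12 * π / (2 * k + 1) ^ 4)
        + 24 / (2 * k + 1) ^ 5 := by
  have hm : (2 * k + 1 : ℝ) ≠ 0 := by positivity
  rw [intervalIntegral.integral_eq_sub_of_hasDerivAt
    (fun s _ => hasDerivAt_antideriv_pow_four_mul_sin hm s)
    (Continuous.intervalIntegrable (by fun_prop) _ _)]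
  have hπ2 : (2 * k + 1 : ℝ) * (π / 2) = k * π + π / 2 := by ring
  simp only [hπ2, cos_add_pi_div_two, sin_add_pi_div_two, sin_nat_mul_pi, cos_nat_mul_pi,
    mul_zero, cos_zero, sin_zero]
  field_simp
  ring

theorem summable_one_div_odd_pow {p : ℕ} (hp : 1 < p) :
    Summable (fun k : ℕ => 1 / (2 * (k : ℝ) + 1) ^ p) := by
  have hinj : Function.Injective (fun k : ℕ => 2 * k + 1) := fun a b h => by simpa using h
  exact ((summable_one_div_nat_pow.mpr hp).comp_injective hinj).congr fun k => by simp

theorem summable_neg_one_pow_div_odd_pow {p : ℕ} (hp : 1 < p) :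
    Summable (fun k : ℕ => (-1) ^ k / (2 * (k : ℝ) + 1) ^ p) :=
  (summable_one_div_odd_pow hp).of_norm_bounded fun k => by
    simp [abs_of_pos (by positivity : (0 : ℝ) < 2 * k + 1)]

theorem tsum_one_div_odd_pow {p : ℕ} (hp : 1 < p) :
    ∑' k : ℕ, 1 / (2 * (k : ℝ) + 1) ^ p = (1 - 1 / 2 ^ p) * ∑' n : ℕ, 1 / ((n : ℝ) + 1) ^ p := by
  have hsum : Summable (fun n : ℕ => 1 / ((n : ℝ) + 1) ^ p) :=
    ((summable_nat_add_iff 1).mpr (summable_one_div_nat_pow.mpr hp)).congr fun n => by push_cast; rfl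
  have heven : HasSum (fun k : ℕ => 1 / (((2 * k : ℕ) : ℝ) + 1) ^ p)
      (∑' k : ℕ, 1 / (2 * (k : ℝ) + 1) ^ p) := by
    simpa using (summable_one_div_odd_pow hp).hasSum
  have hodd : HasSum (fun k : ℕ => 1 / (((2 * k + 1 : ℕ) : ℝ) + 1) ^ p)
      (1 / 2 ^ p * ∑' n : ℕ, 1 / ((n : ℝ) + 1) ^ p) := by
    refine (hsum.hasSum.mul_left (1 / 2 ^ p)).congr_fun fun k => ?_
    rw [one_div_mul_one_div, ← mul_pow]
    push_cast
    ring
  have := (HasSum.even_add_odd (f := fun n : ℕ => 1 / ((n : ℝ) + 1) ^ p) heven hodd).unique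
    hsum.hasSum
  linarith

theorem integral_pow_four_div_sin :
    ∫ s in (0 : ℝ)..π / 2, s ^ 4 / sin s
      = π ^ 3 * catalanConst - 24 * π * beta4 + 48 * ∑' k : ℕ, 1 / (2 * (k : ℝ) + 1) ^ 5 := by
  have hterms : HasSum (fun k : ℕ => 2 * ∫ s in (0 : ℝ)..π / 2, s ^ 4 * sin ((2 * k + 1) * s))
      (π ^ 3 * catalanConst - 24 * π * beta4 + 48 * ∑' k : ℕ, 1 / (2 * (k : ℝ) + 1) ^ 5) := by
    refine ((((summable_neg_one_pow_div_odd_pow one_lt_two).hasSum.mul_left (π ^ 3)).sub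
      ((summable_neg_one_pow_div_odd_pow (by norm_num : 1 < 4)).hasSum.mul_left (24 * π))).add
      ((summable_one_div_odd_pow (by norm_num : 1 < 5)).hasSum.mul_left 48)).congr_fun fun k => ?_
    rw [integral_pow_four_mul_sin_odd]
    field_simp
    ring
  exact tendsto_nhds_unique (tendsto_sum_two_mul_integral_mul_sin_odd
    (Continuous.intervalIntegrable (by fun_prop) _ _) (intervalIntegrable_pow_succ_div_sin 3))
    hterms.tendsto_sum_nat

theorem arctan_fourth_div_x_integral :
    ∫ x in (0:ℝ)..1, Real.arctan x ^ 4 / x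
      = (93/32) * zeta5 - (3/2) * π * beta4 + (1/16) * π ^ 3 * catalanConst := by
  rw [integral_arctan_pow_div_self, integral_pow_four_div_sin,
    tsum_one_div_odd_pow (by norm_num : 1 < 5)]
  unfold zeta5
  ring
end

section
/- The alternating double S-value S(1̄,1) := 4·∑_{n₁>n₂≥1} (−1)^{n₁}/((2n₁−1)·(2n₂)) equals −2G + π·log 2. -/
/-!
Put `R j = ∫₀¹ x^(2j+2) / (1 + x²) dx`, the tail `∑_{m ≥ j} (-1)^(m-j) / (2m+3)` of the Leibniz
series. Since `(-1)^m / (2m+3) = (-1)^m R m - (-1)^(m+1) R (m+1)`, Abel summation rewrites the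
`N`-th partial sum as `4 ∑_{j<N} (-1)^j R j / (2j+2)` minus an error term that tends to `0`
because `R N ≤ 1 / (2N+3)` and the harmonic numbers grow sublinearly.

The recursion `R j + R (j+1) = 1 / (2j+3)` shows that `(1 - t²) ∑_j (-1)^j R j t^(2j+1)` is the
arctangent series minus `π t / 4`; integrating termwise against `∫₀¹ t^(2j+1) dt = 1 / (2j+2)`
gives `∑_j (-1)^j R j / (2j+2) = ∫₀¹ (arctan t - π t / 4) / (1 - t²) dt`. The involution
`t = (1 - x) / (1 + x)` of `(0, 1)`, under which `arctan t = π/4 - arctan x`, turns this into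
`∫₀¹ (π / (4 (1 + x)) - arctan x / (2x)) dx = (π/4) log 2 - G/2`, where `∫₀¹ arctan x / x dx = G`
by termwise integration of the arctangent series.
-/

open Real Filter

open MeasureTheory Set Topology

theorem Finset.sum_range_sub_mul_sum_range_succ {R : Type*} [CommRing R] (b c : ℕ → R) (N : ℕ) :
    ∑ m ∈ Finset.range N, (b m - b (m + 1)) * ∑ j ∈ Finset.range (m + 1), c j
      = ∑ m ∈ Finset.range N, c m * b m - (∑ j ∈ Finset.range N, c j) * b N := by
  induction N with
  | zero => simp
  | succ N ih =>
    rw [Finset.sum_range_succ, ih, Finset.sum_range_succ (fun m => c m * b m),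
      Finset.sum_range_succ c]
    ring

theorem summable_one_div_add_one_sq : Summable fun n : ℕ => 1 / ((n : ℝ) + 1) ^ 2 := by
  simpa using (summable_nat_add_iff 1).mpr (Real.summable_one_div_nat_pow.mpr one_lt_two)

theorem integral_Ioo_pow (k : ℕ) : ∫ x in Ioo (0 : ℝ) 1, x ^ k = 1 / (k + 1) := by
  rw [← integral_Ioc_eq_integral_Ioo, ← intervalIntegral.integral_of_le zero_le_one, integral_pow]
  simp

theorem hasSum_integral_Ioo_of_hasSum_pow {f : ℝ → ℝ} {a : ℕ → ℝ} {k : ℕ → ℕ}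
    (hf : ∀ x ∈ Ioo (0 : ℝ) 1, HasSum (fun n => a n * x ^ k n) (f x))
    (ha : Summable fun n => |a n| / (k n + 1)) :
    HasSum (fun n => a n / (k n + 1)) (∫ x in Ioo (0 : ℝ) 1, f x) := by
  have hint : ∀ n, Integrable (fun x => a n * x ^ k n) (volume.restrict (Ioo (0 : ℝ) 1)) :=
    fun n => (((continuous_pow _).const_mul _).integrableOn_Icc).mono_set Ioo_subset_Icc_self
  have hnorm : ∀ n, ∫ x in Ioo (0 : ℝ) 1, ‖a n * x ^ k n‖ = |a n| / (k n + 1) := fun n => by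
    rw [setIntegral_congr_fun measurableSet_Ioo fun x hx => by
      rw [norm_mul, norm_pow, Real.norm_of_nonneg hx.1.le, Real.norm_eq_abs],
      integral_const_mul, integral_Ioo_pow, mul_one_div]
  have := hasSum_integral_of_summable_integral_norm hint (by simpa only [hnorm] using ha)
  simp only [integral_const_mul, integral_Ioo_pow, mul_one_div] at this
  rwa [setIntegral_congr_fun measurableSet_Ioo fun x hx => (hf x hx).tsum_eq] at this

theorem integral_Ioo_comp_one_sub_div_one_add (g : ℝ → ℝ) :
    ∫ x in Ioo (0 : ℝ) 1, g x = ∫ x in Ioo (0 : ℝ) 1, 2 / (1 + x) ^ 2 * g ((1 - x) / (1 + x)) := by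
  set φ : ℝ → ℝ := fun x => (1 - x) / (1 + x)
  have hmaps : MapsTo φ (Ioo 0 1) (Ioo 0 1) := fun x hx => by
    have h : 0 < 1 + x := by linarith [hx.1]
    exact ⟨div_pos (by linarith [hx.2]) h, (div_lt_one h).2 (by linarith [hx.1])⟩
  have hinv : LeftInvOn φ φ (Ioo 0 1) := fun x hx => by
    have h : 1 + x ≠ 0 := by linarith [hx.1]
    simp only [φ]
    field_simp
    ring
  have hderiv : ∀ x ∈ Ioo (0 : ℝ) 1, HasDerivWithinAt φ (-2 / (1 + x) ^ 2) (Ioo 0 1) x :=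
    fun x hx => by
    have h : 1 + x ≠ 0 := by linarith [hx.1]
    refine (((hasDerivAt_id x).const_sub 1).div ((hasDerivAt_id x).const_add 1) h
      |>.congr_deriv ?_).hasDerivWithinAt
    simp only [id]
    field_simp
    ring
  have himage : φ '' Ioo 0 1 = Ioo 0 1 := (hinv.surjOn hmaps).image_eq_of_mapsTo hmaps
  conv_lhs => rw [← himage, integral_image_eq_integral_abs_deriv_smul measurableSet_Ioo hderiv
    hinv.injOn]
  refine setIntegral_congr_fun measurableSet_Ioo fun x _ => ?_
  rw [smul_eq_mul, abs_div, abs_neg, abs_two, abs_of_nonneg (sq_nonneg _)]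

theorem arctan_one_sub_div_one_add {x : ℝ} (hx : -1 < x) :
    arctan ((1 - x) / (1 + x)) = π / 4 - arctan x := by
  have h : 0 < 1 + x := by linarith
  have hmul : x * ((1 - x) / (1 + x)) < 1 := by
    rw [mul_div_assoc', div_lt_one h]
    nlinarith [sq_nonneg x]
  rw [eq_sub_iff_add_eq', arctan_add hmul, ← arctan_one]
  have e : x + (1 - x) / (1 + x) = 1 - x * ((1 - x) / (1 + x)) := by
    field_simp
    ring
  rw [e, div_self (sub_pos.2 hmul).ne']

theorem integral_Ioo_one_div_one_add : ∫ x in Ioo (0 : ℝ) 1, 1 / (1 + x) = log 2 := by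
  rw [← integral_Ioc_eq_integral_Ioo, ← intervalIntegral.integral_of_le zero_le_one,
    intervalIntegral.integral_comp_add_left (fun x => 1 / x), integral_one_div] <;> norm_num

theorem integral_arctan_div_self : ∫ x in Ioo (0 : ℝ) 1, arctan x / x = catalanConst := by
  have hser : ∀ x ∈ Ioo (0 : ℝ) 1,
      HasSum (fun n : ℕ => (-1) ^ n / (2 * n + 1) * x ^ (2 * n)) (arctan x / x) := by
    intro x hx
    have := (Real.hasSum_arctan (by rw [Real.norm_of_nonneg hx.1.le]; exact hx.2)).div_const x
    refine this.congr_fun fun n => ?_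
    have := hx.1.ne'
    push_cast
    field_simp
    ring
  have hsum : Summable fun n : ℕ => |(-1 : ℝ) ^ n / (2 * n + 1)| / ((2 * n : ℕ) + 1) := by
    refine summable_one_div_add_one_sq.of_nonneg_of_le (fun n => by positivity) fun n => ?_
    rw [abs_div, abs_pow, abs_neg, abs_one, one_pow, abs_of_pos (by positivity), div_div]
    push_cast
    gcongr
    nlinarith
  rw [catalanConst, ((hasSum_integral_Ioo_of_hasSum_pow hser hsum).tsum_eq).symm]
  congr 1 with n
  push_cast
  rw [div_div, ← sq]

theorem integral_arctan_sub_div_one_sub_sq :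
    ∫ t in Ioo (0 : ℝ) 1, (arctan t - π / 4 * t) / (1 - t ^ 2)
      = π / 4 * log 2 - catalanConst / 2 := by
  have hsubst : ∀ x ∈ Ioo (0 : ℝ) 1,
      2 / (1 + x) ^ 2 * ((arctan ((1 - x) / (1 + x)) - π / 4 * ((1 - x) / (1 + x)))
        / (1 - ((1 - x) / (1 + x)) ^ 2)) = π / 4 * (1 / (1 + x)) - 1 / 2 * (arctan x / x) := by
    intro x hx
    have h : 1 + x ≠ 0 := by linarith [hx.1]
    have h0 : x ≠ 0 := hx.1.ne'
    have hden : 1 - ((1 - x) / (1 + x)) ^ 2 = 4 * x / (1 + x) ^ 2 := by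
      field_simp
      ring
    rw [arctan_one_sub_div_one_add (by linarith [hx.1]), hden]
    field_simp
    ring
  have hbound : IntegrableOn (fun x : ℝ => arctan x / x) (Ioo 0 1) := by
    refine Measure.integrableOn_of_bounded (M := 1) measure_Ioo_lt_top.ne
      (continuous_arctan.measurable.div measurable_id).aestronglyMeasurable ?_
    filter_upwards [ae_restrict_mem measurableSet_Ioo] with x hx
    have harctan : arctan x ≤ x := by
      simpa only [tan_arctan] using le_tan (arctan_nonneg.2 hx.1.le) (arctan_lt_pi_div_two x)
    rw [Real.norm_of_nonneg (div_nonneg (arctan_nonneg.2 hx.1.le) hx.1.le)]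
    exact div_le_one_of_le₀ harctan hx.1.le
  have hinv : IntegrableOn (fun x : ℝ => 1 / (1 + x)) (Ioo 0 1) :=
    ((continuousOn_const.div (by fun_prop) fun x hx => by linarith [hx.1]).integrableOn_Icc
      ).mono_set Ioo_subset_Icc_self
  rw [integral_Ioo_comp_one_sub_div_one_add, setIntegral_congr_fun measurableSet_Ioo hsubst,
    integral_sub (hinv.const_mul _) (hbound.const_mul _), integral_const_mul, integral_const_mul,
    integral_Ioo_one_div_one_add, integral_arctan_div_self]
  ring

/-- The tail `∑_{m ≥ j} (-1)^(m-j) / (2m+3)` of the Leibniz series, in integral form. -/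
noncomputable def altTail (j : ℕ) : ℝ := ∫ x in (0 : ℝ)..1, x ^ (2 * j + 2) / (1 + x ^ 2)

theorem altTail_add_altTail_succ (j : ℕ) : altTail j + altTail (j + 1) = 1 / (2 * j + 3) := by
  have hcont : ∀ k : ℕ, Continuous fun x : ℝ => x ^ k / (1 + x ^ 2) := fun k =>
    (continuous_pow k).div (by fun_prop) fun x => by positivity
  rw [altTail, altTail, ← intervalIntegral.integral_add ((hcont _).intervalIntegrable _ _)
    ((hcont _).intervalIntegrable _ _)]
  have : ∀ x : ℝ, x ^ (2 * j + 2) / (1 + x ^ 2) + x ^ (2 * (j + 1) + 2) / (1 + x ^ 2)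
      = x ^ (2 * j + 2) := fun x => by
    field_simp
    ring
  simp only [this, integral_pow]
  push_cast
  ring

theorem altTail_nonneg (j : ℕ) : 0 ≤ altTail j :=
  intervalIntegral.integral_nonneg zero_le_one fun x hx => by have := hx.1; positivity

theorem altTail_le (j : ℕ) : altTail j ≤ 1 / (2 * j + 3) := by
  linarith [altTail_add_altTail_succ j, altTail_nonneg (j + 1)]

theorem altTail_zero : altTail 0 = 1 - π / 4 := by
  have : ∀ x : ℝ, x ^ (2 * 0 + 2) / (1 + x ^ 2) = 1 - 1 / (1 + x ^ 2) := fun x => by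
    field_simp
    ring
  simp only [altTail, this]
  rw [intervalIntegral.integral_sub intervalIntegrable_const
    (by exact (continuous_const.div (by fun_prop) fun x => by positivity).intervalIntegrable _ _),
    integral_one_div_one_add_sq]
  simp

theorem neg_one_pow_div_eq_altTail_sub (m : ℕ) :
    (-1 : ℝ) ^ m / (2 * m + 3) = (-1) ^ m * altTail m - (-1) ^ (m + 1) * altTail (m + 1) := by
  rw [pow_succ, ← one_div_mul_eq_div, ← altTail_add_altTail_succ]
  ring

theorem tendsto_sum_mul_altTail :
    Tendsto (fun N : ℕ => (∑ j ∈ Finset.range N, 1 / (2 * (j : ℝ) + 2)) * ((-1) ^ N * altTail N))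
      atTop (𝓝 0) := by
  have hc : Tendsto (fun j : ℕ => 1 / (2 * (j : ℝ) + 2)) atTop (𝓝 0) := by
    have := (tendsto_one_div_add_atTop_nhds_zero_nat (𝕜 := ℝ)).div_const 2
    simp only [zero_div] at this
    refine this.congr fun j => ?_
    field_simp
  refine squeeze_zero_norm' ?_ hc.cesaro
  filter_upwards [eventually_gt_atTop 0] with N hN
  have hC : 0 ≤ ∑ j ∈ Finset.range N, 1 / (2 * (j : ℝ) + 2) :=
    Finset.sum_nonneg fun j _ => by positivity
  have hR : altTail N ≤ (N : ℝ)⁻¹ := by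
    refine (altTail_le N).trans ?_
    rw [one_div]
    gcongr
    linarith
  rw [norm_mul, norm_mul, norm_pow, norm_neg, norm_one, one_pow, one_mul,
    Real.norm_of_nonneg hC, Real.norm_of_nonneg (altTail_nonneg N), mul_comm]
  exact mul_le_mul_of_nonneg_right hR hC

theorem hasSum_altTail_mul_pow {t : ℝ} (ht : |t| < 1) :
    HasSum (fun j : ℕ => (-1) ^ j * altTail j * t ^ (2 * j + 1))
      ((arctan t - π / 4 * t) / (1 - t ^ 2)) := by
  set u : ℕ → ℝ := fun j => (-1) ^ j * altTail j * t ^ (2 * j + 1)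
  have ht2 : t ^ 2 < 1 := by nlinarith [abs_nonneg t, sq_abs t]
  have hu : HasSum u (∑' j, u j) := by
    refine (Summable.of_norm_bounded (summable_geometric_of_lt_one (sq_nonneg t) ht2)
      fun j => ?_).hasSum
    have hR : altTail j ≤ 1 := (altTail_le j).trans (by rw [div_le_one (by positivity)]; linarith)
    rw [norm_mul, norm_mul, norm_pow, norm_neg, norm_one, one_pow, one_mul, norm_pow,
      Real.norm_of_nonneg (altTail_nonneg j), Real.norm_eq_abs, pow_succ, pow_mul, sq_abs]
    calc altTail j * ((t ^ 2) ^ j * |t|) ≤ 1 * ((t ^ 2) ^ j * 1) := by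
          gcongr
      _ = (t ^ 2) ^ j := by ring
  have hshift := ((hasSum_nat_add_iff' 1).2 hu).sub (hu.mul_left (t ^ 2))
  have harctan := (hasSum_nat_add_iff' 1).2 (Real.hasSum_arctan (x := t) ht)
  have hterm : ∀ j : ℕ, (-1) ^ (j + 1) * t ^ (2 * (j + 1) + 1) / ↑(2 * (j + 1) + 1)
      = u (j + 1) - t ^ 2 * u j := fun j => by
    push_cast
    linear_combination (-(-1) ^ (j + 1) * t ^ (2 * (j + 1) + 1)) * altTail_add_altTail_succ j
  simp only [hterm] at harctan
  have heq := harctan.unique hshift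
  simp only [Finset.range_one, Finset.sum_singleton, u, altTail_zero, pow_zero, mul_zero,
    zero_add, pow_one, one_mul, Nat.cast_one, div_one] at heq
  convert hu using 1
  rw [div_eq_iff (by linarith)]
  linear_combination heq

theorem hasSum_one_div_mul_altTail :
    HasSum (fun j : ℕ => 1 / (2 * (j : ℝ) + 2) * ((-1) ^ j * altTail j))
      (π / 4 * log 2 - catalanConst / 2) := by
  have hser : ∀ t ∈ Ioo (0 : ℝ) 1, HasSum (fun j : ℕ => (-1) ^ j * altTail j * t ^ (2 * j + 1))
      ((arctan t - π / 4 * t) / (1 - t ^ 2)) := fun t ht =>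
    hasSum_altTail_mul_pow (by rw [abs_of_pos ht.1]; exact ht.2)
  have hsum : Summable fun j : ℕ => |(-1) ^ j * altTail j| / ((2 * j + 1 : ℕ) + 1) := by
    refine summable_one_div_add_one_sq.of_nonneg_of_le (fun j => by positivity) fun j => ?_
    rw [abs_mul, abs_pow, abs_neg, abs_one, one_pow, one_mul, abs_of_nonneg (altTail_nonneg j)]
    calc altTail j / ((2 * j + 1 : ℕ) + 1) ≤ 1 / (2 * j + 3) / (2 * j + 2) := by
          rw [show ((2 * j + 1 : ℕ) : ℝ) + 1 = 2 * j + 2 by push_cast; ring]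
          gcongr
          exact altTail_le j
      _ ≤ 1 / ((j : ℝ) + 1) ^ 2 := by
          rw [div_div, div_le_div_iff₀ (by positivity) (by positivity)]
          nlinarith
  have := hasSum_integral_Ioo_of_hasSum_pow hser hsum
  rw [integral_arctan_sub_div_one_sub_sq] at this
  convert this using 2 with j
  push_cast
  ring

/-- `S(1̄,1) = 4·∑_{n=2}^∞ (−1)^n/(2n−1) · ∑_{k=1}^{n−1} 1/(2k) = −2G + π·log 2`,
stated as a limit of partial sums (conditionally convergent series); here `n = m + 2`
and `k = j + 1`. -/
theorem S_onebar_one :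
    Tendsto (fun N : ℕ =>
        4 * ∑ m ∈ Finset.range N, ((-1 : ℝ) ^ m / (2 * (m : ℝ) + 3)) *
          ∑ j ∈ Finset.range (m + 1), 1 / (2 * (j : ℝ) + 2))
      atTop (nhds (-2 * catalanConst + π * Real.log 2)) := by
  have hpartial : ∀ N : ℕ,
      ∑ m ∈ Finset.range N, ((-1 : ℝ) ^ m / (2 * (m : ℝ) + 3)) *
          ∑ j ∈ Finset.range (m + 1), 1 / (2 * (j : ℝ) + 2)
        = ∑ j ∈ Finset.range N, 1 / (2 * (j : ℝ) + 2) * ((-1) ^ j * altTail j)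
          - (∑ j ∈ Finset.range N, 1 / (2 * (j : ℝ) + 2)) * ((-1) ^ N * altTail N) := fun N => by
    simp only [neg_one_pow_div_eq_altTail_sub]
    exact Finset.sum_range_sub_mul_sum_range_succ (fun m => (-1) ^ m * altTail m) _ N
  have hlim := (hasSum_one_div_mul_altTail.tendsto_sum_nat.sub tendsto_sum_mul_altTail).const_mul 4
  convert hlim using 2 with N
  · rw [hpartial]
  · ring
end

section
/- For every integer r ≥ 1, the r-th power of arctan has the series expansion arctan(x)^r = r!·∑_{n₁>n₂>⋯>n_r>0} (−1)^{n₁−r}·x^{2n₁−r} / ((2n₁−r)·(2n₂−r+1)⋯(2n_r−1)) for |x| ≤ 1 (with x real and, for convergence at x = ±1, r-fold iterated summation). -/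
/-!
Write `partialSum r N` for the `N`-th partial sum divided by `r!`. Summing out every entry of a
tuple except the largest one, `n + 1`, turns `partialSum (s + 1) N` into a power series whose
coefficients involve `weightSum s n`, the sum of `1 / denom` over the decreasing `s`-tuples
bounded by `n`. A telescoping identity gives
`(1 + x²) ∂ₓ partialSum (s + 1) N = partialSum s N - (-1)^(N+s) weightSum s N x^(2N-s)`,
so the error of `partialSum (s + 1) N` against `arctan^(s+1)/(s+1)!` is the integral over `[0, x]`
of the error of `partialSum s N` plus a boundary term, divided by `1 + t²`. On `[0, 1]` the
boundary term contributes at most `weightSum s N / (N + 1) ≤ (1 + log N)^s / (N + 1) → 0`, so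
induction on `r` gives uniform convergence on `[0, 1]`; `partialSum r N` has the parity of `r`,
which covers `[-1, 0]`.
-/

open Real Filter Classical Finset
open scoped Nat Topology

lemma Fin.strictAnti_cons {α : Type*} [Preorder α] {n : ℕ} {a : α} {f : Fin n → α} :
    StrictAnti (Fin.cons a f : Fin (n + 1) → α) ↔ (∀ j, f j < a) ∧ StrictAnti f :=
  Fin.liftFun_cons (· > ·)

lemma StrictAnti.le_apply_add_val {s : ℕ} {f : Fin s → ℕ} (hf : StrictAnti f)
    (hpos : ∀ j, 1 ≤ f j) (i : Fin s) : s ≤ f i + i := by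
  have hcard := card_le_card_of_injOn f (s := Ici i) (t := Icc 1 (f i))
    (fun j hj => by simpa using ⟨hpos j, hf.antitone (mem_Ici.1 hj)⟩) hf.injective.injOn
  simp only [Fin.card_Ici, Nat.card_Icc] at hcard
  omega

namespace ArctanPow

def decreasingTuples (s M : ℕ) : Finset (Fin s → ℕ) :=
  (Fintype.piFinset fun _ : Fin s => Finset.Icc 1 M).filter (fun f => StrictAnti f)

def denom (s : ℕ) (f : Fin s → ℕ) : ℝ :=
  ∏ i : Fin s, (2 * (f i : ℝ) - (s : ℝ) + (i : ℕ))

noncomputable def weightSum (s M : ℕ) : ℝ :=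
  ∑ f ∈ decreasingTuples s M, (denom s f)⁻¹

lemma mem_decreasingTuples {s M : ℕ} {f : Fin s → ℕ} :
    f ∈ decreasingTuples s M ↔ (∀ i, 1 ≤ f i ∧ f i ≤ M) ∧ StrictAnti f := by
  simp [decreasingTuples]

lemma cons_mem_decreasingTuples {s M a : ℕ} {g : Fin s → ℕ} :
    (Fin.cons a g : Fin (s + 1) → ℕ) ∈ decreasingTuples (s + 1) M ↔
      1 ≤ a ∧ a ≤ M ∧ g ∈ decreasingTuples s (a - 1) := by
  simp only [mem_decreasingTuples, Fin.forall_fin_succ, Fin.cons_zero, Fin.cons_succ,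
    Fin.strictAnti_cons]
  constructor
  · rintro ⟨⟨ha, hg⟩, hlt, hanti⟩
    exact ⟨ha.1, ha.2, fun i => ⟨(hg i).1, by have := hlt i; omega⟩, hanti⟩
  · rintro ⟨ha1, haM, hg, hanti⟩
    exact ⟨⟨⟨ha1, haM⟩, fun i => ⟨(hg i).1, by have := hg i; omega⟩⟩,
      fun i => by have := hg i; omega, hanti⟩

lemma sum_decreasingTuples_succ {β : Type*} [AddCommMonoid β] (s M : ℕ)
    (F : (Fin (s + 1) → ℕ) → β) :
    ∑ f ∈ decreasingTuples (s + 1) M, F f =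
      ∑ n ∈ range M, ∑ g ∈ decreasingTuples s n, F (Fin.cons (n + 1) g) := by
  have hcons : ∀ f ∈ decreasingTuples (s + 1) M, Fin.cons (f 0 - 1 + 1) (Fin.tail f) = f := by
    intro f hf
    rw [Nat.sub_add_cancel ((mem_decreasingTuples.1 hf).1 0).1, Fin.cons_self_tail]
  rw [sum_sigma']
  refine sum_nbij' (fun f => ⟨f 0 - 1, Fin.tail f⟩) (fun p => Fin.cons (p.1 + 1) p.2)
    ?_ ?_ (fun f hf => hcons f hf) ?_ (fun f hf => by rw [hcons f hf])
  · intro f hf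
    rw [← hcons f hf, cons_mem_decreasingTuples] at hf
    rw [mem_sigma, mem_range]
    refine ⟨?_, by simpa using hf.2.2⟩
    dsimp only
    omega
  · rintro ⟨n, g⟩ hp
    rw [mem_sigma, mem_range] at hp
    rw [cons_mem_decreasingTuples, Nat.add_sub_cancel]
    exact ⟨by omega, by omega, hp.2⟩
  · rintro ⟨n, g⟩ _
    simp

lemma denom_cons (s a : ℕ) (g : Fin s → ℕ) :
    denom (s + 1) (Fin.cons a g) = (2 * a - s - 1) * denom s g := by
  rw [denom, Fin.prod_univ_succ, denom]
  simp only [Fin.cons_zero, Fin.cons_succ, Fin.val_zero, Fin.val_succ]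
  push_cast
  congr 1
  · ring
  · exact prod_congr rfl fun i _ => by ring

lemma prod_le_denom {s M : ℕ} {f : Fin s → ℕ} (hf : f ∈ decreasingTuples s M) :
    ∏ i, (f i : ℝ) ≤ denom s f := by
  obtain ⟨hbd, hanti⟩ := mem_decreasingTuples.1 hf
  refine prod_le_prod (fun i _ => by positivity) fun i _ => ?_
  have h := hanti.le_apply_add_val (fun j => (hbd j).1) i
  have h' : (s : ℝ) ≤ f i + (i : ℕ) := by exact_mod_cast h
  linarith

lemma denom_pos {s M : ℕ} {f : Fin s → ℕ} (hf : f ∈ decreasingTuples s M) : 0 < denom s f :=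
  (prod_pos fun i _ => by
    exact_mod_cast ((mem_decreasingTuples.1 hf).1 i).1).trans_le (prod_le_denom hf)

lemma weightSum_nonneg (s M : ℕ) : 0 ≤ weightSum s M :=
  sum_nonneg fun _ hf => (inv_pos.2 (denom_pos hf)).le

lemma weightSum_eq_zero_of_lt {s M : ℕ} (h : M < s) : weightSum s M = 0 := by
  refine sum_eq_zero fun f hf => absurd h (not_lt.2 ?_)
  obtain ⟨hbd, hanti⟩ := mem_decreasingTuples.1 hf
  have h0 := hanti.le_apply_add_val (fun j => (hbd j).1) ⟨0, by omega⟩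
  have hM := (hbd ⟨0, by omega⟩).2
  simp only at h0
  omega

@[simp]
lemma weightSum_zero (M : ℕ) : weightSum 0 M = 1 := by
  simp [weightSum, decreasingTuples, denom, Subsingleton.strictAnti]

lemma weightSum_succ (s M : ℕ) :
    weightSum (s + 1) M = ∑ n ∈ range M, (2 * n + 1 - s : ℝ)⁻¹ * weightSum s n := by
  rw [weightSum, sum_decreasingTuples_succ]
  refine sum_congr rfl fun n _ => ?_
  rw [weightSum, mul_sum]
  refine sum_congr rfl fun g _ => ?_
  rw [denom_cons, mul_inv]
  push_cast
  ring_nf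

lemma weightSum_le_harmonic_pow (s M : ℕ) : weightSum s M ≤ (harmonic M : ℝ) ^ s := by
  calc weightSum s M ≤ ∑ f ∈ decreasingTuples s M, ∏ i, (f i : ℝ)⁻¹ := by
        refine sum_le_sum fun f hf => ?_
        rw [prod_inv_distrib]
        exact inv_anti₀ (prod_pos fun i _ => by
          exact_mod_cast ((mem_decreasingTuples.1 hf).1 i).1) (prod_le_denom hf)
    _ ≤ ∑ f ∈ Fintype.piFinset fun _ : Fin s => Icc 1 M, ∏ i, (f i : ℝ)⁻¹ :=
        sum_le_sum_of_subset_of_nonneg (filter_subset _ _) fun _ _ _ => by positivity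
    _ = (harmonic M : ℝ) ^ s := by
        rw [← prod_univ_sum (fun _ => Icc 1 M) fun _ k => (k : ℝ)⁻¹, prod_const, card_univ,
          Fintype.card_fin, harmonic_eq_sum_Icc]
        push_cast
        rfl

-- For `n < s` the exponent `2 * n + 1 - s` is truncated, but then `weightSum s n = 0`.
noncomputable def partialSum : ℕ → ℕ → ℝ → ℝ
  | 0, _, _ => 1
  | s + 1, N, x => ∑ n ∈ range N,
      (-1) ^ (n + s) * weightSum s n / (2 * n + 1 - s) * x ^ (2 * n + 1 - s)

lemma sum_decreasingTuples_eq_partialSum (r N : ℕ) (hr : 0 < r) (x : ℝ) :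
    ∑ f ∈ decreasingTuples r N,
        (-1 : ℝ) ^ (f ⟨0, hr⟩ + r) * x ^ (2 * f ⟨0, hr⟩ - r) / denom r f =
      partialSum r N x := by
  obtain ⟨s, rfl⟩ : ∃ s, r = s + 1 := ⟨r - 1, by omega⟩
  rw [sum_decreasingTuples_succ, partialSum]
  refine sum_congr rfl fun n _ => ?_
  rw [weightSum, mul_sum, sum_div, sum_mul]
  refine sum_congr rfl fun g _ => ?_
  rw [Fin.zero_eta, Fin.cons_zero, denom_cons, div_mul_eq_div_div_swap,
    show 2 * (n + 1) - (s + 1) = 2 * n + 1 - s by omega]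
  push_cast
  ring

lemma partialSum_succ_sub (s N : ℕ) (x : ℝ) :
    partialSum s (N + 1) x - partialSum s N x =
      (-1) ^ (N + s + 1) * (weightSum s (N + 1) - weightSum s N) * x ^ (2 * N + 2 - s) := by
  cases s with
  | zero => simp [partialSum]
  | succ s =>
    rw [partialSum, partialSum, sum_range_succ, weightSum_succ, weightSum_succ, sum_range_succ,
      show 2 * N + 2 - (s + 1) = 2 * N + 1 - s by omega]
    ring

lemma partialSum_zero_right (s : ℕ) (x : ℝ) : partialSum s 0 x = weightSum s 0 := by
  cases s with
  | zero => simp [partialSum]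
  | succ s => simp [partialSum, weightSum_eq_zero_of_lt]

lemma one_add_sq_mul_sum (s N : ℕ) (x : ℝ) :
    (1 + x ^ 2) * ∑ n ∈ range N, (-1) ^ (n + s) * weightSum s n * x ^ (2 * n - s) =
      partialSum s N x - (-1) ^ (N + s) * weightSum s N * x ^ (2 * N - s) := by
  induction N with
  | zero =>
    rcases s.eq_zero_or_pos with rfl | hs
    · simp [partialSum]
    · simp [partialSum_zero_right, weightSum_eq_zero_of_lt hs]
  | succ N ih =>
    have hpow :
        weightSum s N * x ^ (2 * N + 2 - s) = weightSum s N * (x ^ 2 * x ^ (2 * N - s)) := by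
      rcases lt_or_ge N s with h | h
      · simp [weightSum_eq_zero_of_lt h]
      · rw [← pow_add, show 2 + (2 * N - s) = 2 * N + 2 - s by omega]
    rw [sum_range_succ, mul_add, ih, sub_eq_iff_eq_add.1 (partialSum_succ_sub s N x),
      show 2 * (N + 1) - s = 2 * N + 2 - s by omega]
    linear_combination -(-1) ^ (N + s) * hpow

lemma partialSum_succ_zero (s N : ℕ) : partialSum (s + 1) N 0 = 0 := by
  refine sum_eq_zero fun n _ => ?_
  rcases lt_or_ge n s with h | h
  · simp [weightSum_eq_zero_of_lt h]
  · simp [zero_pow (show 2 * n + 1 - s ≠ 0 by omega)]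

lemma partialSum_neg (r N : ℕ) (x : ℝ) : partialSum r N (-x) = (-1) ^ r * partialSum r N x := by
  cases r with
  | zero => simp [partialSum]
  | succ s =>
    rw [partialSum, partialSum, mul_sum]
    refine sum_congr rfl fun n _ => ?_
    rcases lt_or_ge n s with h | h
    · simp [weightSum_eq_zero_of_lt h]
    · rw [neg_pow x, neg_one_pow_eq_pow_mod_two (2 * n + 1 - s),
        show (2 * n + 1 - s) % 2 = (s + 1) % 2 by omega, ← neg_one_pow_eq_pow_mod_two]
      ring

lemma continuous_partialSum (r N : ℕ) : Continuous (partialSum r N) := by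
  cases r with
  | zero => exact continuous_const
  | succ s => exact continuous_finsetSum _ fun n _ => by fun_prop

lemma hasDerivAt_partialSum_succ (s N : ℕ) (x : ℝ) :
    HasDerivAt (partialSum (s + 1) N)
      ((partialSum s N x - (-1) ^ (N + s) * weightSum s N * x ^ (2 * N - s)) / (1 + x ^ 2)) x := by
  rw [← one_add_sq_mul_sum, mul_div_cancel_left₀ _ (by positivity)]
  refine HasDerivAt.fun_sum fun n _ => ?_
  rcases lt_or_ge n s with h | h
  · simpa [weightSum_eq_zero_of_lt h] using hasDerivAt_const x (0 : ℝ)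
  · have hcast : ((2 * n + 1 - s : ℕ) : ℝ) = 2 * n + 1 - s := by
      rw [Nat.cast_sub (by omega)]
      push_cast
      ring
    have hne : (2 * n + 1 - s : ℝ) ≠ 0 := by
      rw [← hcast]
      exact Nat.cast_ne_zero.2 (by omega)
    refine ((hasDerivAt_pow (2 * n + 1 - s) x).const_mul
      ((-1) ^ (n + s) * weightSum s n / (2 * n + 1 - s))).congr_deriv ?_
    rw [hcast, show 2 * n + 1 - s - 1 = 2 * n - s by omega]
    field_simp

lemma partialSum_succ_sub_arctan_pow (s N : ℕ) (x : ℝ) :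
    partialSum (s + 1) N x - arctan x ^ (s + 1) / (s + 1)! =
      ∫ t in 0..x, (partialSum s N t - arctan t ^ s / (s ! : ℝ) -
        (-1) ^ (N + s) * weightSum s N * t ^ (2 * N - s)) / (1 + t ^ 2) := by
  have hderiv (t : ℝ) :
      HasDerivAt (fun y => partialSum (s + 1) N y - arctan y ^ (s + 1) / (s + 1)!)
      ((partialSum s N t - arctan t ^ s / (s ! : ℝ) -
        (-1) ^ (N + s) * weightSum s N * t ^ (2 * N - s)) / (1 + t ^ 2)) t := by
    refine ((hasDerivAt_partialSum_succ s N t).sub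
      (((hasDerivAt_arctan t).pow (s + 1)).div_const ((s + 1)! : ℝ))).congr_deriv ?_
    rw [Nat.factorial_succ]
    push_cast
    field_simp
    ring
  have hcont : Continuous fun t => (partialSum s N t - arctan t ^ s / (s ! : ℝ) -
      (-1) ^ (N + s) * weightSum s N * t ^ (2 * N - s)) / (1 + t ^ 2) := by
    have := continuous_partialSum s N
    fun_prop (disch := intro t; positivity)
  rw [intervalIntegral.integral_eq_sub_of_hasDerivAt (fun t _ => hderiv t)
    (hcont.intervalIntegrable _ _)]
  simp [partialSum_succ_zero]

lemma abs_partialSum_succ_sub_arctan_pow_le {s N : ℕ} {δ x : ℝ} (hsN : s ≤ N)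
    (hx : x ∈ Set.Icc (0 : ℝ) 1)
    (hδ : ∀ t ∈ Set.Icc (0 : ℝ) 1, |partialSum s N t - arctan t ^ s / (s ! : ℝ)| ≤ δ) :
    |partialSum (s + 1) N x - arctan x ^ (s + 1) / (s + 1)!| ≤ δ + weightSum s N / (N + 1) := by
  obtain ⟨hx0, hx1⟩ := hx
  set k := 2 * N - s with hk
  have hδ0 : 0 ≤ δ := (abs_nonneg _).trans (hδ 0 ⟨le_rfl, zero_le_one⟩)
  have hG := weightSum_nonneg s N
  have hbound : ∀ t ∈ Set.Ioc 0 x, ‖(partialSum s N t - arctan t ^ s / (s ! : ℝ) -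
      (-1) ^ (N + s) * weightSum s N * t ^ k) / (1 + t ^ 2)‖ ≤ δ + weightSum s N * t ^ k := by
    rintro t ⟨ht0, htx⟩
    rw [Real.norm_eq_abs, abs_div, abs_of_pos (by positivity : (0 : ℝ) < 1 + t ^ 2)]
    refine (div_le_self (abs_nonneg _) (by nlinarith)).trans ((abs_sub _ _).trans (add_le_add
      (hδ t ⟨ht0.le, htx.trans hx1⟩) ?_))
    simp [abs_mul, abs_of_nonneg hG, abs_of_pos ht0]
  have hNk : (N : ℝ) + 1 ≤ k + 1 := by
    rw [hk, Nat.cast_sub (by omega)]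
    push_cast
    linarith [(Nat.cast_le (α := ℝ)).2 hsN]
  rw [partialSum_succ_sub_arctan_pow, ← Real.norm_eq_abs]
  have hcont : Continuous fun t : ℝ => δ + weightSum s N * t ^ k := by fun_prop
  calc _ ≤ ∫ t in 0..x, (δ + weightSum s N * t ^ k) :=
        intervalIntegral.norm_integral_le_of_norm_le hx0 (MeasureTheory.ae_of_all _ hbound)
          (hcont.intervalIntegrable _ _)
    _ = δ * x + weightSum s N * (x ^ (k + 1) / (k + 1)) := by
        simp [integral_pow, mul_comm]
    _ ≤ δ + weightSum s N / (N + 1) := by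
        rw [← mul_one_div (weightSum s N)]
        gcongr
        · exact mul_le_of_le_one_right hδ0 hx1
        · exact pow_le_one₀ hx0 hx1

lemma tendsto_weightSum_div_atTop (s : ℕ) :
    Tendsto (fun N : ℕ => weightSum s N / (N + 1)) atTop (𝓝 0) := by
  have hlog : Tendsto (fun y : ℝ => (1 + log y) ^ s / (y + 1)) atTop (𝓝 0) := by
    refine ((tendsto_pow_log_div_mul_add_atTop (exp 1)⁻¹ 1 s (by positivity)).comp
      (tendsto_id.const_mul_atTop (exp_pos 1))).congr' ?_
    filter_upwards [eventually_gt_atTop 0] with y hy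
    simp [log_mul (exp_pos 1).ne' hy.ne']
  refine squeeze_zero (fun N => div_nonneg (weightSum_nonneg s N) (by positivity))
    (fun N => ?_) (hlog.comp tendsto_natCast_atTop_atTop)
  have hharmonic : (0 : ℝ) ≤ harmonic N := by unfold harmonic; positivity
  exact div_le_div_of_nonneg_right ((weightSum_le_harmonic_pow s N).trans
    (pow_le_pow_left₀ hharmonic (harmonic_le_one_add_log N) s)) (by positivity)

theorem tendstoUniformlyOn_partialSum (r : ℕ) :
    TendstoUniformlyOn (partialSum r) (fun x => arctan x ^ r / r !) atTop (Set.Icc 0 1) := by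
  rw [Metric.tendstoUniformlyOn_iff]
  induction r with
  | zero => exact fun ε hε => Eventually.of_forall fun N x _ => by simp [partialSum, hε]
  | succ s ih =>
    intro ε hε
    filter_upwards [ih (ε / 2) (half_pos hε),
      (tendsto_weightSum_div_atTop s).eventually (gt_mem_nhds (half_pos hε)),
      eventually_ge_atTop s] with N hN hG hsN x hx
    have := abs_partialSum_succ_sub_arctan_pow_le hsN hx (δ := ε / 2) fun t ht => by
      rw [abs_sub_comm, ← Real.dist_eq]
      exact (hN t ht).le
    rw [Real.dist_eq, abs_sub_comm]
    linarith

lemma tendsto_partialSum (r : ℕ) {x : ℝ} (hx : |x| ≤ 1) :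
    Tendsto (fun N => partialSum r N x) atTop (𝓝 (arctan x ^ r / r !)) := by
  rcases le_total 0 x with hx0 | hx0
  · exact (tendstoUniformlyOn_partialSum r).tendsto_at ⟨hx0, (le_abs_self x).trans hx⟩
  · have h := ((tendstoUniformlyOn_partialSum r).tendsto_at
      ⟨neg_nonneg.2 hx0, (neg_le_abs x).trans hx⟩).const_mul ((-1) ^ r)
    convert h using 1
    · exact funext fun N => by rw [← partialSum_neg, neg_neg]
    · rw [arctan_neg, neg_pow (arctan x), ← mul_div_assoc, ← mul_assoc, ← mul_pow]
      norm_num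

end ArctanPow

/-- For `r ≥ 1` and `|x| ≤ 1`,
`arctan(x)^r = r!·∑_{n₁>⋯>n_r>0} (−1)^{n₁−r}·x^{2n₁−r}/∏_{j=1}^{r}(2n_j−r+j−1)`,
where the sum is taken in the iterated order (partial sums truncated by the bound `N`
on all indices). A tuple is encoded as a strictly decreasing function `f : Fin r → ℕ`
with values in `[1, N]`; the `j`-th denominator factor (with `j = i + 1`) is
`2·f i − r + i`, and `(−1)^{n₁−r} = (−1)^{f 0 + r}`. -/
theorem arctan_pow_series (r : ℕ) (hr : 0 < r) (x : ℝ) (hx : |x| ≤ 1) :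
    Tendsto (fun N : ℕ =>
        (Nat.factorial r : ℝ) *
          ∑ f ∈ (Fintype.piFinset fun _ : Fin r => Finset.Icc 1 N).filter
              (fun f => StrictAnti f),
            (-1 : ℝ) ^ (f ⟨0, hr⟩ + r) * x ^ (2 * f ⟨0, hr⟩ - r) /
              ∏ i : Fin r, (2 * (f i : ℝ) - (r : ℝ) + (i : ℕ)))
      atTop (nhds (Real.arctan x ^ r)) := by
  have h := (ArctanPow.tendsto_partialSum r hx).const_mul (r ! : ℝ)
  rw [mul_div_cancel₀ _ (by positivity)] at h
  refine h.congr fun N => ?_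
  rw [← ArctanPow.sum_decreasingTuples_eq_partialSum r N hr]
  rfl
end
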